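/- arXiv:1206.4178 — 6 statements merged into one kernel-verified Lean document; each statement's English description precedes it below -/
import Mathlib

section
/- Let r̄_n denote the number of smooth collections of length n (collections S = (S_1,...,S_n) of subsets of {1,...,n+1} with #S_i = i, S_i ⊆ S_{i+1}, and such that for all 1 ≤ a < b ≤ n, b ∈ S_a implies a+1 ∈ S_b). Then r̄_n satisfies the recursion r̄_n = r̄_{n-1} + Σ_{k=0}^{n-1} r̄_k · r̄_{n-1-k}, with r̄_0 = 1. -/
/-!
Sort the smooth collections of length `n` by the value `c` with `S 1 = {c}`. If `c = 1` or
`c = n + 1`, then `c` lies in every `S i`; deleting it and relabelling the remaining values turns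
`S 2, …, S n` into an arbitrary smooth collection of length `n - 1`. If `2 ≤ c ≤ n`, the
smoothness condition applied to `c ∈ S a` for `a < c` forces `S c = {2, …, c} ∪ {x}`. Then
`S 2 \ {c}, …, S (c - 1) \ {c}` and `S c \ {2, …, c}, …, S n \ {2, …, c}` become, after
relabelling, independent smooth collections of lengths `c - 2` and `n - c + 1`; the second one
records `x`, which is what the relabelling of the first one needs. Summing over `c` gives
`r̄ n = 2 r̄ (n - 1) + ∑_{c=2}^{n} r̄ (c - 2) r̄ (n - c + 1)`.
-/

/-- A collection `S` of subsets `S 1, ..., S n` of `{1, ..., n+1}` is smooth if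
`#S i = i`, `S i ⊆ S (i+1)`, and for all `1 ≤ a < b ≤ n`, `b ∈ S a → a+1 ∈ S b`;
`S i = ∅` outside the range `1 ≤ i ≤ n`. -/
def IsSmooth (n : ℕ) (S : ℕ → Finset ℕ) : Prop :=
  (∀ i, i = 0 ∨ n < i → S i = ∅) ∧
  (∀ i, 1 ≤ i → i ≤ n → S i ⊆ Finset.Icc 1 (n + 1) ∧ (S i).card = i) ∧
  (∀ i, 1 ≤ i → i < n → S i ⊆ S (i + 1)) ∧
  (∀ a b, 1 ≤ a → a < b → b ≤ n → b ∈ S a → a + 1 ∈ S b)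

open Finset

namespace IsSmooth

variable {n : ℕ} {S : ℕ → Finset ℕ}

lemma eq_empty (hS : IsSmooth n S) {i : ℕ} (hi : i = 0 ∨ n < i) : S i = ∅ :=
  hS.1 i hi

lemma subset_Icc (hS : IsSmooth n S) (i : ℕ) : S i ⊆ Icc 1 (n + 1) := by
  by_cases hi : 1 ≤ i ∧ i ≤ n
  · exact (hS.2.1 i hi.1 hi.2).1
  · simp [hS.eq_empty (by omega : i = 0 ∨ n < i)]

lemma card_eq (hS : IsSmooth n S) {i : ℕ} (hi : i ≤ n) : #(S i) = i := by
  rcases Nat.eq_zero_or_pos i with rfl | h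
  · simp [hS.eq_empty (Or.inl rfl)]
  · exact (hS.2.1 i h hi).2

lemma mono (hS : IsSmooth n S) {a b : ℕ} (hab : a ≤ b) (hb : b ≤ n) : S a ⊆ S b := by
  induction b, hab using Nat.le_induction with
  | base => exact subset_rfl
  | succ b _ ih =>
    refine (ih (by omega)).trans ?_
    rcases Nat.eq_zero_or_pos b with rfl | hb0
    · simp [hS.eq_empty (Or.inl rfl)]
    · exact hS.2.2.1 b hb0 (by omega)

lemma succ_mem (hS : IsSmooth n S) {a b : ℕ} (hab : a < b) (hb : b ≤ n) (h : b ∈ S a) :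
    a + 1 ∈ S b := by
  rcases Nat.eq_zero_or_pos a with rfl | ha
  · simp [hS.eq_empty (Or.inl rfl)] at h
  · exact hS.2.2.2 a b ha hab hb h

end IsSmooth

lemma isSmooth_zero_iff {S : ℕ → Finset ℕ} : IsSmooth 0 S ↔ S = fun _ => ∅ := by
  refine ⟨fun h => funext fun i => h.eq_empty (by omega), ?_⟩
  rintro rfl
  exact ⟨fun _ _ => rfl, by omega, by omega, by omega⟩

lemma finite_setOf_isSmooth (n : ℕ) : {S : ℕ → Finset ℕ | IsSmooth n S}.Finite := by
  have hpi : (Set.pi Set.univ fun _ : Fin (n + 1) =>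
      ((Icc 1 (n + 1)).powerset : Set (Finset ℕ))).Finite :=
    Set.Finite.pi fun _ => finite_toSet _
  refine Set.Finite.of_finite_image (f := fun S (i : Fin (n + 1)) => S i) (hpi.subset ?_) ?_
  · rintro _ ⟨S, hS, rfl⟩ i -
    exact mem_powerset.2 (hS.subset_Icc i)
  · intro S hS S' hS' h
    funext i
    by_cases hi : i ≤ n
    · exact congrFun h ⟨i, by omega⟩
    · rw [IsSmooth.eq_empty hS (by omega), IsSmooth.eq_empty hS' (by omega)]

lemma ncard_setOf_isSmooth_eq_sum {n : ℕ} (hn : 1 ≤ n) :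
    {S : ℕ → Finset ℕ | IsSmooth n S}.ncard =
      ∑ c ∈ range (n + 1), {S : ℕ → Finset ℕ | IsSmooth n S ∧ S 1 = {c + 1}}.ncard := by
  classical
  have hfin := finite_setOf_isSmooth n
  rw [Set.ncard_eq_toFinset_card _ hfin, card_eq_sum_card_fiberwise (f := fun S => S 1)
    (t := (range (n + 1)).image fun c => {c + 1}), sum_image (by simp)]
  · refine sum_congr rfl fun c _ => ?_
    rw [← Set.ncard_coe_finset]
    congr 1
    ext S
    simp
  · intro S hS
    rw [Set.Finite.coe_toFinset] at hS
    obtain ⟨a, ha⟩ := card_eq_one.1 (IsSmooth.card_eq hS hn)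
    have := mem_Icc.1 (IsSmooth.subset_Icc hS 1 (ha ▸ mem_singleton_self a))
    rw [mem_coe, mem_image]
    exact ⟨a - 1, mem_range.2 (by omega), by rw [Nat.sub_add_cancel this.1, ← ha]⟩


namespace SmoothCollection

section Window

variable (τ : ℕ → ℕ) (m k : ℕ)

/-- The window `S (m + 1), …, S (m + k)` of a collection whose sets all contain a set `F` of `m`
values, with `F` removed and the remaining values read back through a relabelling `τ` of
`[1, k + 1]`; `expand` is the inverse construction. Smoothness survives in both directions
because `τ` is the shift `u ↦ u + m` away from the two ends of `[1, k + 1]` (`hreg` below). -/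
def contract (S : ℕ → Finset ℕ) (j : ℕ) : Finset ℕ :=
  if 1 ≤ j ∧ j ≤ k then {u ∈ Icc 1 (k + 1) | τ u ∈ S (j + m)} else ∅

def expand (F : Finset ℕ) (T : ℕ → Finset ℕ) (i : ℕ) : Finset ℕ :=
  if m ≤ i ∧ i ≤ m + k then F ∪ (T (i - m)).image τ else ∅

variable {τ m k} {n : ℕ} {F : Finset ℕ} {S T : ℕ → Finset ℕ}

lemma mem_contract {j u : ℕ} (hj : 1 ≤ j) (hjk : j ≤ k) :
    u ∈ contract τ m k S j ↔ u ∈ Icc 1 (k + 1) ∧ τ u ∈ S (j + m) := by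
  simp [contract, hj, hjk]

lemma contract_eq_empty {j : ℕ} (hj : ¬(1 ≤ j ∧ j ≤ k)) : contract τ m k S j = ∅ :=
  if_neg hj

lemma expand_of_le {i : ℕ} (hi : m ≤ i) (hik : i ≤ m + k) :
    expand τ m k F T i = F ∪ (T (i - m)).image τ :=
  if_pos ⟨hi, hik⟩

lemma expand_eq_empty {i : ℕ} (hi : ¬(m ≤ i ∧ i ≤ m + k)) : expand τ m k F T i = ∅ :=
  if_neg hi

lemma expand_self (hT : IsSmooth k T) : expand τ m k F T m = F := by
  rw [expand_of_le le_rfl (by omega), Nat.sub_self, hT.eq_empty (Or.inl rfl), image_empty,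
    union_empty]

lemma image_contract (hF : Disjoint F ((Icc 1 (k + 1)).image τ)) (hS : IsSmooth n S)
    (hmk : m + k ≤ n) (hcover : S (m + k) \ F ⊆ (Icc 1 (k + 1)).image τ)
    {j : ℕ} (hj : 1 ≤ j) (hjk : j ≤ k) : (contract τ m k S j).image τ = S (j + m) \ F := by
  ext v
  simp only [mem_image, mem_contract hj hjk, mem_sdiff]
  constructor
  · rintro ⟨u, ⟨hu, hτu⟩, rfl⟩
    exact ⟨hτu, disjoint_right.1 hF (mem_image_of_mem τ hu)⟩
  · rintro ⟨hv, hvF⟩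
    have hv' : v ∈ S (m + k) \ F := mem_sdiff.2 ⟨hS.mono (by omega) hmk hv, hvF⟩
    obtain ⟨u, hu, rfl⟩ := mem_image.1 (hcover hv')
    exact ⟨u, ⟨hu, hv⟩, rfl⟩

lemma isSmooth_contract (hinj : Set.InjOn τ (Icc 1 (k + 1)))
    (hreg : ∀ u, 2 ≤ u → u ≤ k → τ u = u + m)
    (hF : Disjoint F ((Icc 1 (k + 1)).image τ)) (hS : IsSmooth n S) (hmk : m + k ≤ n)
    (hFS : ∀ i, m < i → i ≤ m + k → F ⊆ S i) (hFcard : #F = m)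
    (hcover : S (m + k) \ F ⊆ (Icc 1 (k + 1)).image τ) : IsSmooth k (contract τ m k S) := by
  refine ⟨fun j hj => contract_eq_empty (by omega), fun j hj hjk => ⟨?_, ?_⟩, ?_, ?_⟩
  · exact fun u hu => ((mem_contract hj hjk).1 hu).1
  · have hsub : (contract τ m k S j : Set ℕ) ⊆ Icc 1 (k + 1) :=
      coe_subset.2 fun u hu => ((mem_contract hj hjk).1 hu).1
    rw [← card_image_of_injOn (hinj.mono hsub), image_contract hF hS hmk hcover hj hjk,
      card_sdiff_of_subset (hFS _ (by omega) (by omega)), hS.card_eq (by omega), hFcard]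
    omega
  · intro j hj hjk u hu
    rw [mem_contract hj hjk.le] at hu
    rw [mem_contract (by omega) hjk]
    exact ⟨hu.1, hS.mono (by omega) (by omega) hu.2⟩
  · intro a b ha hab hbk hb
    rw [mem_contract ha (by omega), hreg b (by omega) hbk] at hb
    rw [mem_contract (by omega) hbk, hreg (a + 1) (by omega) (by omega), mem_Icc,
      show a + 1 + m = a + m + 1 by omega]
    exact ⟨by omega, hS.succ_mem (by omega) (by omega) hb.2⟩

lemma contract_expand (hinj : Set.InjOn τ (Icc 1 (k + 1)))
    (hF : Disjoint F ((Icc 1 (k + 1)).image τ)) (hT : IsSmooth k T)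
    (hST : ∀ i, m < i → i ≤ m + k → S i = expand τ m k F T i) : contract τ m k S = T := by
  funext j
  by_cases hj : 1 ≤ j ∧ j ≤ k
  · ext u
    rw [mem_contract hj.1 hj.2, hST _ (by omega) (by omega), expand_of_le (by omega) (by omega),
      Nat.add_sub_cancel, mem_union, mem_image]
    constructor
    · rintro ⟨hu, hτu | ⟨w, hw, hwu⟩⟩
      · exact absurd hτu (disjoint_right.1 hF (mem_image_of_mem τ hu))
      · rwa [← hinj (hT.subset_Icc j hw) hu hwu]
    · exact fun hu => ⟨hT.subset_Icc j hu, Or.inr ⟨u, hu, rfl⟩⟩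
  · rw [contract_eq_empty hj, hT.eq_empty (by omega)]

lemma expand_contract (hF : Disjoint F ((Icc 1 (k + 1)).image τ)) (hS : IsSmooth n S)
    (hmk : m + k ≤ n) (hFS : ∀ i, m < i → i ≤ m + k → F ⊆ S i)
    (hcover : S (m + k) \ F ⊆ (Icc 1 (k + 1)).image τ) {i : ℕ} (hi : m < i)
    (hik : i ≤ m + k) :
    expand τ m k F (contract τ m k S) i = S i := by
  rw [expand_of_le hi.le hik, image_contract hF hS hmk hcover (by omega) (by omega),
    Nat.sub_add_cancel hi.le, union_sdiff_of_subset (hFS i hi hik)]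

lemma card_expand (hinj : Set.InjOn τ (Icc 1 (k + 1)))
    (hF : Disjoint F ((Icc 1 (k + 1)).image τ))
    (hT : IsSmooth k T) (hFcard : #F = m) {i : ℕ} (hi : m ≤ i) (hik : i ≤ m + k) :
    #(expand τ m k F T i) = i := by
  have hsub : (T (i - m) : Set ℕ) ⊆ Icc 1 (k + 1) := coe_subset.2 (hT.subset_Icc _)
  rw [expand_of_le hi hik, card_union_of_disjoint (hF.mono_right (image_subset_image
    (hT.subset_Icc _))), card_image_of_injOn (hinj.mono hsub), hT.card_eq (by omega), hFcard]
  omega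

lemma expand_subset_Icc (hT : IsSmooth k T)
    (hrange : F ∪ (Icc 1 (k + 1)).image τ ⊆ Icc 1 (n + 1)) (i : ℕ) :
    expand τ m k F T i ⊆ Icc 1 (n + 1) := by
  unfold expand
  split_ifs
  · exact (union_subset_union subset_rfl (image_subset_image (hT.subset_Icc _))).trans hrange
  · exact empty_subset _

lemma expand_subset_expand_succ (hT : IsSmooth k T) {i : ℕ} (hi : m ≤ i) (hik : i < m + k) :
    expand τ m k F T i ⊆ expand τ m k F T (i + 1) := by
  rw [expand_of_le hi hik.le, expand_of_le (by omega) hik]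
  exact union_subset_union subset_rfl (image_subset_image (hT.mono (by omega) (by omega)))

lemma succ_mem_expand (hinj : Set.InjOn τ (Icc 1 (k + 1)))
    (hreg : ∀ u, 2 ≤ u → u ≤ k → τ u = u + m) (hT : IsSmooth k T)
    {a b : ℕ} (ha : m ≤ a) (hab : a < b) (hbk : b ≤ m + k) (hbF : b ∉ F)
    (h : b ∈ expand τ m k F T a) : a + 1 ∈ expand τ m k F T b := by
  rw [expand_of_le ha (by omega), mem_union, mem_image] at h
  obtain ⟨u, hu, hub⟩ := h.resolve_left hbF
  have ha' : a - m ≠ 0 := fun h0 => by simp [h0, hT.eq_empty] at hu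
  have hu' : u = b - m := hinj (hT.subset_Icc _ hu) (by simp; omega)
    (by rw [hub, hreg (b - m) (by omega) (by omega)]; omega)
  subst hu'
  have := hT.succ_mem (by omega) (by omega) hu
  rw [expand_of_le (by omega) hbk]
  exact mem_union_right _ (mem_image.2 ⟨_, this, by rw [hreg _ (by omega) (by omega)]; omega⟩)

end Window

variable {k l : ℕ} {S T U : ℕ → Finset ℕ}

def shiftLast (k y u : ℕ) : ℕ := if u = k + 1 then y else u + 1

lemma shiftLast_of_le {y u : ℕ} (hu : u ≤ k) : shiftLast k y u = u + 1 := if_neg (by omega)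

lemma shiftLast_injOn {y : ℕ} (hy : y ≤ 1 ∨ k + 1 < y) :
    Set.InjOn (shiftLast k y) (Icc 1 (k + 1)) := by
  intro u hu v hv h
  simp only [coe_Icc, Set.mem_Icc] at hu hv
  unfold shiftLast at h
  split_ifs at h <;> omega

lemma image_shiftLast (k y : ℕ) :
    (Icc 1 (k + 1)).image (shiftLast k y) = insert y (Icc 2 (k + 1)) := by
  ext v
  simp only [mem_image, mem_Icc, mem_insert, shiftLast]
  constructor
  · rintro ⟨u, hu, rfl⟩
    split_ifs <;> omega
  · rintro (rfl | hv)
    · exact ⟨k + 1, by omega, if_pos rfl⟩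
    · exact ⟨v - 1, by omega, by rw [if_neg (by omega)]; omega⟩

lemma disjoint_image_shiftLast {f y : ℕ} (hfy : f ≠ y) (hf : f ≤ 1 ∨ k + 1 < f) :
    Disjoint {f} ((Icc 1 (k + 1)).image (shiftLast k y)) := by
  rw [image_shiftLast, disjoint_singleton_left, mem_insert, mem_Icc]
  omega

lemma isSmooth_expand_shiftLast {f y : ℕ} (hfy : f = 1 ∧ y = k + 2 ∨ f = k + 2 ∧ y = 1)
    (hT : IsSmooth k T) : IsSmooth (k + 1) (expand (shiftLast k y) 1 k {f} T) := by
  have hinj := shiftLast_injOn (k := k) (y := y) (by omega)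
  have hF := disjoint_image_shiftLast (k := k) (f := f) (y := y) (by omega) (by omega)
  refine ⟨fun i hi => expand_eq_empty (by omega), fun i hi hik => ⟨?_, ?_⟩, ?_, ?_⟩
  · refine expand_subset_Icc hT ?_ i
    rw [image_shiftLast]
    intro v hv
    simp only [mem_union, mem_singleton, mem_insert, mem_Icc] at hv ⊢
    omega
  · exact card_expand hinj hF hT (card_singleton f) hi (by omega)
  · exact fun i hi hik => expand_subset_expand_succ hT hi (by omega)
  · refine fun a b ha hab hb => succ_mem_expand hinj (fun u _ hu => shiftLast_of_le hu) hT ha hab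
      (by omega) ?_
    rw [mem_singleton]
    omega

lemma ncard_setOf_isSmooth_first_eq {f y : ℕ}
    (hfy : f = 1 ∧ y = k + 2 ∨ f = k + 2 ∧ y = 1) :
    {S : ℕ → Finset ℕ | IsSmooth (k + 1) S ∧ S 1 = {f}}.ncard =
      {T : ℕ → Finset ℕ | IsSmooth k T}.ncard := by
  have hinj := shiftLast_injOn (k := k) (y := y) (by omega)
  have hreg : ∀ u, 2 ≤ u → u ≤ k → shiftLast k y u = u + 1 :=
    fun _ _ hu => shiftLast_of_le hu
  have hF := disjoint_image_shiftLast (k := k) (f := f) (y := y) (by omega) (by omega)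
  have hFS {S : ℕ → Finset ℕ} (hS : IsSmooth (k + 1) S) (hS1 : S 1 = {f}) (i : ℕ)
      (hi : 1 < i) (hik : i ≤ 1 + k) : {f} ⊆ S i := by
    rw [← hS1]
    exact hS.mono hi.le (by omega)
  have hcover {S : ℕ → Finset ℕ} (hS : IsSmooth (k + 1) S) :
      S (1 + k) \ {f} ⊆ (Icc 1 (k + 1)).image (shiftLast k y) := by
    intro v hv
    rw [mem_sdiff, mem_singleton] at hv
    have := mem_Icc.1 (hS.subset_Icc _ hv.1)
    rw [image_shiftLast, mem_insert, mem_Icc]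
    omega
  have hround {S : ℕ → Finset ℕ} (hS : IsSmooth (k + 1) S) (hS1 : S 1 = {f}) :
      expand (shiftLast k y) 1 k {f} (contract (shiftLast k y) 1 k S) = S := by
    funext i
    rcases Nat.lt_trichotomy i 1 with hi | rfl | hi
    · rw [expand_eq_empty (by omega), hS.eq_empty (by omega)]
    · rw [hS1, expand_self (isSmooth_contract hinj hreg hF hS (by omega) (hFS hS hS1)
        (card_singleton f) (hcover hS))]
    · by_cases hik : i ≤ 1 + k
      · exact expand_contract hF hS (by omega) (hFS hS hS1) (hcover hS) hi hik
      · rw [expand_eq_empty (by omega), hS.eq_empty (by omega)]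
  refine Set.ncard_congr (fun S _ => contract (shiftLast k y) 1 k S)
    (fun S hS => isSmooth_contract hinj hreg hF hS.1 (by omega) (hFS hS.1 hS.2)
      (card_singleton f) (hcover hS.1))
    (fun S S' hS hS' h => by rw [← hround hS.1 hS.2, ← hround hS'.1 hS'.2]; exact congrArg _ h)
    (fun T hT => ⟨_, ⟨isSmooth_expand_shiftLast hfy hT, expand_self hT⟩,
      contract_expand hinj hF hT fun _ _ _ => rfl⟩)

def shiftTail (m u : ℕ) : ℕ := if u = 1 then 1 else u + m

lemma shiftTail_of_two_le {m u : ℕ} (hu : 2 ≤ u) : shiftTail m u = u + m := if_neg (by omega)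

lemma shiftTail_injOn (m j : ℕ) : Set.InjOn (shiftTail m) (Icc 1 j) := by
  intro u hu v hv h
  simp only [coe_Icc, Set.mem_Icc] at hu hv
  unfold shiftTail at h
  split_ifs at h <;> omega

lemma image_shiftTail (m l : ℕ) :
    (Icc 1 (l + 2)).image (shiftTail m) = insert 1 (Icc (m + 2) (m + l + 2)) := by
  ext v
  simp only [mem_image, mem_Icc, mem_insert, shiftTail]
  constructor
  · rintro ⟨u, hu, rfl⟩
    split_ifs <;> omega
  · rintro (rfl | hv)
    · exact ⟨1, by omega, if_pos rfl⟩
    · exact ⟨v - m, by omega, by rw [if_neg (by omega)]; omega⟩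

/-- The value `x` with `S (k + 2) = {2, …, k + 2} ∪ {x}`, read off the tail collection `U`
(here `m = k + 1`); `(U 1).sup id` is the element of the singleton `U 1`. -/
def extra (m : ℕ) (U : ℕ → Finset ℕ) : ℕ := shiftTail m ((U 1).sup id)

lemma image_shiftTail_one (m : ℕ) (hU : IsSmooth (l + 1) U) :
    (U 1).image (shiftTail m) = {extra m U} := by
  obtain ⟨u, hu⟩ := card_eq_one.1 (hU.card_eq (by omega))
  simp [extra, hu]

lemma extra_eq_one_or (m : ℕ) (hU : IsSmooth (l + 1) U) :
    extra m U = 1 ∨ m + 2 ≤ extra m U ∧ extra m U ≤ m + l + 2 := by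
  have hx := mem_singleton_self (extra m U)
  rw [← image_shiftTail_one m hU] at hx
  have hx' := image_subset_image (f := shiftTail m) (hU.subset_Icc 1) hx
  rw [image_shiftTail, mem_insert, mem_Icc] at hx'
  omega

def contractTail (k l : ℕ) (S : ℕ → Finset ℕ) : ℕ → Finset ℕ :=
  contract (shiftTail (k + 1)) (k + 1) (l + 1) S

def contractHead (k l : ℕ) (S : ℕ → Finset ℕ) : ℕ → Finset ℕ :=
  contract (shiftLast k (extra (k + 1) (contractTail k l S))) 1 k S

def merge (k l : ℕ) (T U : ℕ → Finset ℕ) (i : ℕ) : Finset ℕ :=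
  if i ≤ k + 1 then expand (shiftLast k (extra (k + 1) U)) 1 k {k + 2} T i
  else expand (shiftTail (k + 1)) (k + 1) (l + 1) (Icc 2 (k + 2)) U i

lemma disjoint_image_shiftTail (k l : ℕ) :
    Disjoint (Icc 2 (k + 2)) ((Icc 1 (l + 2)).image (shiftTail (k + 1))) := by
  rw [image_shiftTail, disjoint_left]
  intro v hv hv'
  rw [mem_Icc] at hv
  rw [mem_insert, mem_Icc] at hv'
  omega

lemma disjoint_image_shiftLast_extra (hU : IsSmooth (l + 1) U) :
    Disjoint {k + 2} ((Icc 1 (k + 1)).image (shiftLast k (extra (k + 1) U))) :=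
  disjoint_image_shiftLast (by have := extra_eq_one_or (k + 1) hU; omega) (by omega)

lemma shiftLast_extra_injOn (hU : IsSmooth (l + 1) U) :
    Set.InjOn (shiftLast k (extra (k + 1) U)) (Icc 1 (k + 1)) :=
  shiftLast_injOn (by have := extra_eq_one_or (k + 1) hU; omega)

lemma Icc_two_subset (hS : IsSmooth (k + l + 2) S) (hS1 : S 1 = {k + 2}) :
    Icc 2 (k + 2) ⊆ S (k + 2) := by
  intro v hv
  rw [mem_Icc] at hv
  have hc : k + 2 ∈ S (v - 1) := hS.mono (a := 1) (by omega) (by omega) (by simp [hS1])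
  simpa [Nat.sub_add_cancel (by omega : 1 ≤ v)] using hS.succ_mem (by omega) (by omega) hc

lemma Icc_two_subset_of_lt (hS : IsSmooth (k + l + 2) S) (hS1 : S 1 = {k + 2}) (i : ℕ)
    (hi : k + 1 < i) (hin : i ≤ k + 1 + (l + 1)) : Icc 2 (k + 2) ⊆ S i :=
  (Icc_two_subset hS hS1).trans (hS.mono hi (by omega))

lemma sdiff_Icc_two_subset (hS : IsSmooth (k + l + 2) S) :
    S (k + 1 + (l + 1)) \ Icc 2 (k + 2) ⊆ (Icc 1 (l + 2)).image (shiftTail (k + 1)) := by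
  intro v hv
  rw [mem_sdiff, mem_Icc] at hv
  have := mem_Icc.1 (hS.subset_Icc _ hv.1)
  rw [image_shiftTail, mem_insert, mem_Icc]
  omega

lemma isSmooth_contractTail (hS : IsSmooth (k + l + 2) S) (hS1 : S 1 = {k + 2}) :
    IsSmooth (l + 1) (contractTail k l S) :=
  isSmooth_contract (shiftTail_injOn _ _) (fun _ hu _ => shiftTail_of_two_le hu)
    (disjoint_image_shiftTail k l) hS (by omega) (Icc_two_subset_of_lt hS hS1) (by simp)
    (sdiff_Icc_two_subset hS)

lemma sdiff_Icc_two_eq (hS : IsSmooth (k + l + 2) S) (hS1 : S 1 = {k + 2}) :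
    S (k + 2) \ Icc 2 (k + 2) = {extra (k + 1) (contractTail k l S)} := by
  rw [← image_shiftTail_one (k + 1) (isSmooth_contractTail hS hS1), contractTail,
    image_contract (disjoint_image_shiftTail k l) hS (by omega) (sdiff_Icc_two_subset hS)
      le_rfl (by omega), Nat.add_comm 1]

lemma sdiff_singleton_subset (hS : IsSmooth (k + l + 2) S) (hS1 : S 1 = {k + 2}) :
    S (1 + k) \ {k + 2} ⊆
      (Icc 1 (k + 1)).image (shiftLast k (extra (k + 1) (contractTail k l S))) := by
  intro v hv
  rw [mem_sdiff, mem_singleton] at hv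
  have hv2 : v ∈ S (k + 2) := hS.mono (by omega) (by omega) hv.1
  rw [image_shiftLast, mem_insert, mem_Icc]
  by_cases hvI : v ∈ Icc 2 (k + 2)
  · rw [mem_Icc] at hvI
    omega
  · have := mem_sdiff.2 ⟨hv2, hvI⟩
    rw [sdiff_Icc_two_eq hS hS1, mem_singleton] at this
    exact Or.inl this

lemma singleton_subset_of_lt (hS : IsSmooth (k + l + 2) S) (hS1 : S 1 = {k + 2}) (i : ℕ)
    (hi : 1 < i) (hik : i ≤ 1 + k) : {k + 2} ⊆ S i := by
  rw [← hS1]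
  exact hS.mono hi.le (by omega)

lemma isSmooth_contractHead (hS : IsSmooth (k + l + 2) S) (hS1 : S 1 = {k + 2}) :
    IsSmooth k (contractHead k l S) :=
  isSmooth_contract (shiftLast_extra_injOn (isSmooth_contractTail hS hS1))
    (fun _ _ hu => shiftLast_of_le hu)
    (disjoint_image_shiftLast_extra (isSmooth_contractTail hS hS1)) hS (by omega)
    (singleton_subset_of_lt hS hS1) (card_singleton _) (sdiff_singleton_subset hS hS1)

lemma merge_contract (hS : IsSmooth (k + l + 2) S) (hS1 : S 1 = {k + 2}) :
    merge k l (contractHead k l S) (contractTail k l S) = S := by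
  have hU := isSmooth_contractTail hS hS1
  funext i
  unfold merge
  split_ifs with hik
  · rcases Nat.lt_trichotomy i 1 with hi | rfl | hi
    · rw [expand_eq_empty (by omega), hS.eq_empty (by omega)]
    · rw [hS1, expand_self (isSmooth_contractHead hS hS1)]
    · exact expand_contract (disjoint_image_shiftLast_extra hU) hS (by omega)
        (singleton_subset_of_lt hS hS1) (sdiff_singleton_subset hS hS1) hi (by omega)
  · by_cases hin : i ≤ k + l + 2
    · exact expand_contract (disjoint_image_shiftTail k l) hS (by omega)
        (Icc_two_subset_of_lt hS hS1) (sdiff_Icc_two_subset hS) (by omega) (by omega)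
    · rw [expand_eq_empty (by omega), hS.eq_empty (by omega)]

lemma merge_of_le {i : ℕ} (hi : i ≤ k + 1) :
    merge k l T U i = expand (shiftLast k (extra (k + 1) U)) 1 k {k + 2} T i := if_pos hi

lemma merge_of_lt {i : ℕ} (hi : k + 1 < i) :
    merge k l T U i = expand (shiftTail (k + 1)) (k + 1) (l + 1) (Icc 2 (k + 2)) U i :=
  if_neg (by omega)

lemma merge_one (hT : IsSmooth k T) : merge k l T U 1 = {k + 2} := by
  rw [merge_of_le (by omega), expand_self hT]

lemma contractTail_merge (hU : IsSmooth (l + 1) U) : contractTail k l (merge k l T U) = U :=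
  contract_expand (shiftTail_injOn _ _) (disjoint_image_shiftTail k l) hU
    fun _ hi _ => merge_of_lt hi

lemma contractHead_merge (hT : IsSmooth k T) (hU : IsSmooth (l + 1) U) :
    contractHead k l (merge k l T U) = T := by
  rw [contractHead, contractTail_merge hU]
  exact contract_expand (shiftLast_extra_injOn hU) (disjoint_image_shiftLast_extra hU) hT
    fun _ _ hi => merge_of_le (by omega)

lemma merge_head_subset_tail (hT : IsSmooth k T) (hU : IsSmooth (l + 1) U) :
    merge k l T U (k + 1) ⊆ merge k l T U (k + 2) := by
  rw [merge_of_le le_rfl, merge_of_lt (by omega), expand_of_le (by omega) (by omega),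
    expand_of_le (by omega) (by omega), Nat.add_sub_cancel, show k + 2 - (k + 1) = 1 by omega,
    image_shiftTail_one _ hU]
  intro v hv
  rw [mem_union, mem_singleton] at hv
  rw [mem_union, mem_Icc, mem_singleton]
  rcases hv with rfl | hv
  · omega
  · have := image_subset_image (hT.subset_Icc k) hv
    rw [image_shiftLast, mem_insert, mem_Icc] at this
    omega

lemma merge_subset_merge_succ (hT : IsSmooth k T) (hU : IsSmooth (l + 1) U) {i : ℕ}
    (hi : 1 ≤ i) (hin : i < k + l + 2) : merge k l T U i ⊆ merge k l T U (i + 1) := by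
  rcases lt_trichotomy (i + 1) (k + 2) with h | h | h
  · rw [merge_of_le (by omega), merge_of_le (by omega)]
    exact expand_subset_expand_succ hT hi (by omega)
  · obtain rfl : i = k + 1 := by omega
    exact merge_head_subset_tail hT hU
  · rw [merge_of_lt (by omega), merge_of_lt (by omega)]
    exact expand_subset_expand_succ hU (by omega) (by omega)

lemma succ_mem_merge (hT : IsSmooth k T) (hU : IsSmooth (l + 1) U) {a b : ℕ} (ha : 1 ≤ a)
    (hab : a < b) (hb : b ≤ k + l + 2) (h : b ∈ merge k l T U a) :
    a + 1 ∈ merge k l T U b := by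
  by_cases hbk : b ≤ k + 1
  · rw [merge_of_le (by omega)] at h ⊢
    exact succ_mem_expand (shiftLast_extra_injOn hU) (fun _ _ hu => shiftLast_of_le hu) hT ha hab
      (by omega) (by rw [mem_singleton]; omega) h
  · rw [merge_of_lt (by omega)]
    by_cases hak : k + 2 ≤ a
    · rw [merge_of_lt (by omega)] at h
      exact succ_mem_expand (shiftTail_injOn _ _) (fun _ hu _ => shiftTail_of_two_le hu) hU
        (by omega) hab (by omega) (by rw [mem_Icc]; omega) h
    · rw [expand_of_le (by omega) (by omega)]
      exact mem_union_left _ (mem_Icc.2 ⟨by omega, by omega⟩)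

lemma isSmooth_merge (hT : IsSmooth k T) (hU : IsSmooth (l + 1) U) :
    IsSmooth (k + l + 2) (merge k l T U) := by
  have hx := extra_eq_one_or (k + 1) hU
  refine ⟨fun i hi => ?_, fun i hi hin => ⟨?_, ?_⟩,
    fun i hi hin => merge_subset_merge_succ hT hU hi hin,
    fun a b ha hab hb => succ_mem_merge hT hU ha hab hb⟩
  · rcases hi with rfl | hi
    · rw [merge_of_le (by omega), expand_eq_empty (by omega)]
    · rw [merge_of_lt (by omega), expand_eq_empty (by omega)]
  · unfold merge
    split_ifs
    · refine expand_subset_Icc hT ?_ i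
      rw [image_shiftLast]
      intro v hv
      simp only [mem_union, mem_singleton, mem_insert, mem_Icc] at hv ⊢
      omega
    · refine expand_subset_Icc hU ?_ i
      rw [image_shiftTail]
      intro v hv
      simp only [mem_union, mem_insert, mem_Icc] at hv ⊢
      omega
  · unfold merge
    split_ifs
    · exact card_expand (shiftLast_extra_injOn hU) (disjoint_image_shiftLast_extra hU) hT
        (card_singleton _) hi (by omega)
    · exact card_expand (shiftTail_injOn _ _) (disjoint_image_shiftTail k l) hU (by simp)
        (by omega) (by omega)

lemma ncard_setOf_isSmooth_first_eq_mul :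
    {S : ℕ → Finset ℕ | IsSmooth (k + l + 2) S ∧ S 1 = {k + 2}}.ncard =
      {T : ℕ → Finset ℕ | IsSmooth k T}.ncard *
        {U : ℕ → Finset ℕ | IsSmooth (l + 1) U}.ncard := by
  rw [← Set.ncard_prod]
  refine Set.ncard_congr (fun S _ => (contractHead k l S, contractTail k l S))
    (fun S hS => ⟨isSmooth_contractHead hS.1 hS.2, isSmooth_contractTail hS.1 hS.2⟩)
    (fun S S' hS hS' h => ?_) (fun TU hTU => ?_)
  · rw [← merge_contract hS.1 hS.2, ← merge_contract hS'.1 hS'.2]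
    simp only [Prod.mk.injEq] at h
    rw [h.1, h.2]
  · obtain ⟨hT, hU⟩ := hTU
    exact ⟨merge k l TU.1 TU.2, ⟨isSmooth_merge hT hU, merge_one hT⟩,
      Prod.ext (contractHead_merge hT hU) (contractTail_merge hU)⟩

end SmoothCollection

/-- The number `r̄ n` of smooth collections of length `n` satisfies `r̄ 0 = 1` and the
large Schröder recursion `r̄ n = r̄ (n-1) + ∑_{k=0}^{n-1} r̄ k * r̄ (n-1-k)`. -/
theorem stmt_4 (rbar : ℕ → ℕ) (hrbar : ∀ n, rbar n = Set.ncard {S : ℕ → Finset ℕ | IsSmooth n S}) :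
    rbar 0 = 1 ∧ ∀ n, 1 ≤ n →
      rbar n = rbar (n - 1) + ∑ k ∈ Finset.range n, rbar k * rbar (n - 1 - k) := by
  have h0 : rbar 0 = 1 := by
    simp only [hrbar, isSmooth_zero_iff, Set.ofPred_eq_eq_singleton, Set.ncard_singleton]
  refine ⟨h0, fun n hn => ?_⟩
  obtain ⟨N, rfl⟩ : ∃ N, n = N + 1 := ⟨n - 1, by omega⟩
  have hfirst : {S : ℕ → Finset ℕ | IsSmooth (N + 1) S ∧ S 1 = {0 + 1}}.ncard = rbar N := by
    rw [hrbar]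
    exact SmoothCollection.ncard_setOf_isSmooth_first_eq (y := N + 2) (by omega)
  have hlast :
      {S : ℕ → Finset ℕ | IsSmooth (N + 1) S ∧ S 1 = {N + 1 + 1}}.ncard = rbar N := by
    rw [hrbar]
    exact SmoothCollection.ncard_setOf_isSmooth_first_eq (y := 1) (by omega)
  have hmiddle : ∀ k ∈ range N,
      {S : ℕ → Finset ℕ | IsSmooth (N + 1) S ∧ S 1 = {k + 1 + 1}}.ncard =
        rbar k * rbar (N - k) := by
    intro k hk
    obtain ⟨l, rfl⟩ : ∃ l, N = k + l + 1 := ⟨N - k - 1, by have := mem_range.1 hk; omega⟩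
    rw [hrbar, hrbar, show k + l + 1 - k = l + 1 by omega]
    exact SmoothCollection.ncard_setOf_isSmooth_first_eq_mul
  rw [hrbar, ncard_setOf_isSmooth_eq_sum hn, sum_range_succ, sum_range_succ',
    sum_congr rfl hmiddle, hfirst, hlast, Nat.add_sub_cancel, sum_range_succ, Nat.sub_self, h0]
  ring
end

section
/- The number of smooth collections of length n equals the n-th large Schröder number r_n, defined by r_0 = 1 and r_n = r_{n-1} + Σ_{k=0}^{n-1} r_k r_{n-1-k}. In particular the number of smooth collections of lengths 1, 2, 3, 4 is 2, 6, 22, 90 respectively. -/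
open Finset

theorem card_filter_range_not_le_iff {p : ℕ → Prop} [DecidablePred p] (hp : Monotone p)
    {N : ℕ} (hN : p N) (i : ℕ) : #{j ∈ range N | ¬p j} ≤ i ↔ p i := by
  refine ⟨fun h ↦ ?_, fun hi ↦ ?_⟩
  · by_contra hi
    have hsub : range (i + 1) ⊆ {j ∈ range N | ¬p j} := by
      intro j hj
      simp only [mem_range, mem_filter] at hj ⊢
      refine ⟨?_, fun hj' ↦ hi (hp (by omega) hj')⟩
      by_contra hjN
      exact hi (hp (by omega) hN)
    have := card_le_card hsub
    rw [card_range] at this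
    omega
  · calc #{j ∈ range N | ¬p j} ≤ #(range i) := card_le_card fun j hj ↦ by
          simp only [mem_filter, mem_range] at hj ⊢
          by_contra hij
          exact hj.2 (hp (by omega) hi)
      _ = i := card_range i

/-- `f v` is the index at which `v` enters the collection; `le_of_le` is the smoothness condition
`b ∈ S a → a + 1 ∈ S b`. -/
structure IsSmoothPerm (n : ℕ) (f : ℕ → ℕ) : Prop where
  bijOn : Set.BijOn f (Set.Icc 1 (n + 1)) (Set.Icc 1 (n + 1))
  eq_self_of_notMem : ∀ v ∉ Set.Icc 1 (n + 1), f v = v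
  le_of_le : ∀ a b, 1 ≤ a → a < b → b ≤ n → f b ≤ a → f (a + 1) ≤ b

namespace IsSmoothPerm

variable {n : ℕ} {f : ℕ → ℕ}

theorem of_surjOn (hm : ∀ v, 1 ≤ v → v ≤ n + 1 → 1 ≤ f v ∧ f v ≤ n + 1)
    (hs : ∀ w, 1 ≤ w → w ≤ n + 1 → ∃ v, 1 ≤ v ∧ v ≤ n + 1 ∧ f v = w)
    (hfix : ∀ v, v = 0 ∨ n + 1 < v → f v = v)
    (hle : ∀ a b, 1 ≤ a → a < b → b ≤ n → f b ≤ a → f (a + 1) ≤ b) : IsSmoothPerm n f := by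
  have hmaps : Set.MapsTo f (Set.Icc 1 (n + 1)) (Set.Icc 1 (n + 1)) := fun v hv ↦ hm v hv.1 hv.2
  refine ⟨(Set.finite_Icc _ _).surjOn_iff_bijOn_of_mapsTo hmaps |>.1 fun w hw ↦ ?_,
    fun v hv ↦ hfix v ?_, hle⟩
  · obtain ⟨v, hv1, hv2, rfl⟩ := hs w hw.1 hw.2
    exact ⟨v, ⟨hv1, hv2⟩, rfl⟩
  · rw [Set.mem_Icc] at hv
    omega

variable (hf : IsSmoothPerm n f)
include hf

theorem mem {v : ℕ} (h1 : 1 ≤ v) (h2 : v ≤ n + 1) : 1 ≤ f v ∧ f v ≤ n + 1 :=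
  hf.bijOn.mapsTo ⟨h1, h2⟩

theorem inj {v w : ℕ} (hv1 : 1 ≤ v) (hv2 : v ≤ n + 1) (hw1 : 1 ≤ w) (hw2 : w ≤ n + 1)
    (h : f v = f w) : v = w :=
  hf.bijOn.injOn ⟨hv1, hv2⟩ ⟨hw1, hw2⟩ h

theorem surj {w : ℕ} (h1 : 1 ≤ w) (h2 : w ≤ n + 1) : ∃ v, 1 ≤ v ∧ v ≤ n + 1 ∧ f v = w := by
  obtain ⟨v, hv, rfl⟩ := hf.bijOn.surjOn ⟨h1, h2⟩
  exact ⟨v, hv.1, hv.2, rfl⟩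

theorem eq_self {v : ℕ} (h : v = 0 ∨ n + 1 < v) : f v = v :=
  hf.eq_self_of_notMem v fun hv ↦ by rw [Set.mem_Icc] at hv; omega

theorem apply_lt_of_ne {m v : ℕ} (hm : f m = n + 1) (hv1 : 1 ≤ v) (hv2 : v ≤ n + 1)
    (hne : v ≠ m) : f v < n + 1 := by
  have hm' : 1 ≤ m ∧ m ≤ n + 1 := by
    by_contra h
    rw [hf.eq_self (by omega)] at hm
    omega
  have := hf.mem hv1 hv2
  have : f v ≠ n + 1 := fun h ↦ hne (hf.inj hv1 hv2 hm'.1 hm'.2 (h.trans hm.symm))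
  omega

end IsSmoothPerm

theorem isSmoothPerm_zero_iff {f : ℕ → ℕ} : IsSmoothPerm 0 f ↔ f = id := by
  refine ⟨fun hf ↦ funext fun v ↦ ?_, ?_⟩
  · rcases (by omega : v = 1 ∨ v = 0 ∨ 0 + 1 < v) with rfl | hv
    · have := hf.mem le_rfl le_rfl
      simp only [id]
      omega
    · exact hf.eq_self hv
  · rintro rfl
    exact ⟨Set.bijOn_id _, fun _ _ ↦ rfl, fun _ _ _ _ _ _ ↦ by omega⟩

instance (n : ℕ) : Finite {f : ℕ → ℕ // IsSmoothPerm n f} := by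
  refine Finite.of_injective (β := Set.Icc 1 (n + 1) → Set.Icc 1 (n + 1))
    (fun f v ↦ ⟨f.1 v, f.2.bijOn.mapsTo v.2⟩) fun f g hfg ↦ Subtype.ext (funext fun v ↦ ?_)
  by_cases hv : v ∈ Set.Icc 1 (n + 1)
  · exact congrArg Subtype.val (congrFun hfg ⟨v, hv⟩)
  · rw [f.2.eq_self_of_notMem v hv, g.2.eq_self_of_notMem v hv]

noncomputable def smoothPermCount (n : ℕ) : ℕ := Nat.card {f : ℕ → ℕ // IsSmoothPerm n f}

theorem smoothPermCount_zero : smoothPermCount 0 = 1 := by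
  rw [smoothPermCount, Nat.card_eq_one_iff_exists]
  exact ⟨⟨id, isSmoothPerm_zero_iff.2 rfl⟩, fun f ↦ Subtype.ext (isSmoothPerm_zero_iff.1 f.2)⟩

theorem isSmoothPerm_succ_iff {n : ℕ} {f : ℕ → ℕ} (hfix : f (n + 2) = n + 2) :
    IsSmoothPerm (n + 1) f ↔ IsSmoothPerm n f := by
  change f (n + 1 + 1) = n + 2 at hfix
  constructor
  · intro hf
    refine .of_surjOn (fun v h1 h2 ↦ ?_) (fun w h1 h2 ↦ ?_) (fun v hv ↦ ?_)
      fun a b ha hab hb ↦ hf.le_of_le a b ha hab (by omega)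
    · have := hf.mem h1 (by omega)
      have := hf.inj h1 (by omega) (by omega) le_rfl
      omega
    · obtain ⟨v, hv1, hv2, rfl⟩ := hf.surj h1 (by omega)
      rcases (by omega : v ≤ n + 1 ∨ v = n + 1 + 1) with hv | rfl
      · exact ⟨v, hv1, hv, rfl⟩
      · omega
    · rcases hv with hv | hv
      · exact hf.eq_self (.inl hv)
      · rcases (by omega : v = n + 1 + 1 ∨ n + 2 < v) with rfl | hv
        · exact hfix
        · exact hf.eq_self (.inr hv)
  · intro hf
    refine .of_surjOn (fun v h1 h2 ↦ ?_) (fun w h1 h2 ↦ ?_)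
      (fun v hv ↦ hf.eq_self (by omega)) fun a b ha hab hb hfb ↦ ?_
    · rcases (by omega : v ≤ n + 1 ∨ v = n + 1 + 1) with hv | rfl
      · have := hf.mem h1 hv
        omega
      · omega
    · rcases (by omega : w ≤ n + 1 ∨ w = n + 1 + 1) with hw | rfl
      · obtain ⟨v, hv1, hv2, rfl⟩ := hf.surj h1 hw
        exact ⟨v, hv1, by omega, rfl⟩
      · exact ⟨n + 1 + 1, by omega, le_rfl, hfix⟩
    · rcases (by omega : b ≤ n ∨ b = n + 1) with hb | rfl
      · exact hf.le_of_le a b ha hab hb hfb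
      · have := hf.mem (v := a + 1) (by omega) (by omega)
        omega

/-- The permutation of `[1, n + 2]` with `k + 1 ↦ n + 2` that acts on the positions
`[1, k] ∪ {n + 2}` as `g` does on `[1, k + 1]`, and on `[k + 2, n + 1]` as `h` does on
`[2, n - k + 1]` shifted by `k`; the value `k + 1` of `g` is replaced by `h 1 + k`. -/
def glue (n k : ℕ) (g h : ℕ → ℕ) (v : ℕ) : ℕ :=
  if v = k + 1 then n + 2
  else if v ≤ k ∨ v = n + 2 then
    if g (if v = n + 2 then k + 1 else v) ≤ k then g (if v = n + 2 then k + 1 else v)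
    else h 1 + k
  else if v ≤ n + 1 then h (v - k) + k
  else v

section glue

variable {n k : ℕ} {g h : ℕ → ℕ}

theorem glue_self : glue n k g h (k + 1) = n + 2 := by simp [glue]

theorem glue_of_le (hk : k ≤ n) {v : ℕ} (hv : v ≤ k) :
    glue n k g h v = if g v ≤ k then g v else h 1 + k := by
  simp [glue, hv, show v ≠ k + 1 by omega, show v ≠ n + 2 by omega]

theorem glue_top (hk : k ≤ n) :
    glue n k g h (n + 2) = if g (k + 1) ≤ k then g (k + 1) else h 1 + k := by
  simp [glue, show n + 2 ≠ k + 1 by omega]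

theorem glue_of_lt_of_le {v : ℕ} (h1 : k + 1 < v) (h2 : v ≤ n + 1) :
    glue n k g h v = h (v - k) + k := by
  simp [glue, show v ≠ k + 1 by omega, show ¬v ≤ k by omega, show v ≠ n + 2 by omega, h2]

theorem glue_of_gt {v : ℕ} (hk : k ≤ n) (hv : n + 2 < v) : glue n k g h v = v := by
  simp [glue, show v ≠ k + 1 by omega, show ¬v ≤ k by omega, show v ≠ n + 2 by omega,
    show ¬v ≤ n + 1 by omega]

theorem exists_glue_eq (hk : k ≤ n) (hg : IsSmoothPerm k g) (hh : IsSmoothPerm (n - k) h)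
    {w : ℕ} (h1 : 1 ≤ w) (h2 : w ≤ n + 2) : ∃ v, 1 ≤ v ∧ v ≤ n + 2 ∧ glue n k g h v = w := by
  have hh1 := hh.mem le_rfl (by omega)
  have hlow : ∀ u, 1 ≤ u → u ≤ k + 1 → ∃ v, 1 ≤ v ∧ v ≤ n + 2 ∧
      glue n k g h v = if g u ≤ k then g u else h 1 + k := by
    intro u hu1 hu2
    rcases (by omega : u ≤ k ∨ u = k + 1) with hu | rfl
    · exact ⟨u, hu1, by omega, glue_of_le hk hu⟩
    · exact ⟨n + 2, by omega, le_rfl, glue_top hk⟩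
  rcases (by omega : w ≤ k ∨ (k + 1 ≤ w ∧ w ≤ n + 1) ∨ w = n + 2) with hw | hw | rfl
  · obtain ⟨u, hu1, hu2, rfl⟩ := hg.surj h1 (by omega)
    obtain ⟨v, hv1, hv2, hv⟩ := hlow u hu1 hu2
    exact ⟨v, hv1, hv2, by rw [hv, if_pos hw]⟩
  · obtain ⟨x, hx1, hx2, hx⟩ := hh.surj (w := w - k) (by omega) (by omega)
    rcases (by omega : x = 1 ∨ 2 ≤ x) with rfl | hx3
    · -- `h 1 + k` is taken at the position that plays the role of `g⁻¹ (k + 1)`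
      obtain ⟨u, hu1, hu2, hgu⟩ := hg.surj (w := k + 1) (by omega) le_rfl
      obtain ⟨v, hv1, hv2, hv⟩ := hlow u hu1 hu2
      exact ⟨v, hv1, hv2, by rw [hv, hgu, if_neg (by omega)]; omega⟩
    · refine ⟨x + k, by omega, by omega, ?_⟩
      rw [glue_of_lt_of_le (by omega) (by omega), Nat.add_sub_cancel, hx]
      omega
  · exact ⟨k + 1, by omega, by omega, glue_self⟩

theorem glue_le_of_le (hk : k ≤ n) (hg : IsSmoothPerm k g) (hh : IsSmoothPerm (n - k) h)
    {a b : ℕ} (ha : 1 ≤ a) (hab : a < b) (hb : b ≤ n + 1) (hfb : glue n k g h b ≤ a) :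
    glue n k g h (a + 1) ≤ b := by
  have hh1 := hh.mem le_rfl (by omega)
  rcases (by omega : b ≤ k ∨ b = k + 1 ∨ k + 1 < b) with hbk | rfl | hbk
  · rw [glue_of_le hk hbk] at hfb
    have hgb : g b ≤ a := by split_ifs at hfb <;> omega
    have := hg.le_of_le a b ha hab hbk hgb
    rw [glue_of_le hk (by omega), if_pos (by omega)]
    exact this
  · rw [glue_self] at hfb
    omega
  · rw [glue_of_lt_of_le hbk (by omega)] at hfb
    have := hh.mem (v := b - k) (by omega) (by omega)
    rw [glue_of_lt_of_le (by omega) (by omega)]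
    rcases (by omega : b ≤ n ∨ b = n + 1) with hbn | rfl
    · have := hh.le_of_le (a - k) (b - k) (by omega) (by omega) (by omega) (by omega)
      rw [show a - k + 1 = a + 1 - k by omega] at this
      omega
    · have := hh.mem (v := a + 1 - k) (by omega) (by omega)
      omega

theorem isSmoothPerm_glue (hk : k ≤ n) (hg : IsSmoothPerm k g) (hh : IsSmoothPerm (n - k) h) :
    IsSmoothPerm (n + 1) (glue n k g h) := by
  refine .of_surjOn (fun v h1 h2 ↦ ?_) (fun w h1 h2 ↦ exists_glue_eq hk hg hh h1 h2)
    (fun v hv ↦ ?_) fun a b ha hab hb ↦ glue_le_of_le hk hg hh ha hab hb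
  · rcases (by omega : v ≤ k ∨ v = k + 1 ∨ (k + 1 < v ∧ v ≤ n + 1) ∨ v = n + 2)
      with hv | rfl | hv | rfl
    · have := hg.mem h1 (by omega)
      have := hh.mem le_rfl (by omega)
      rw [glue_of_le hk hv]
      split_ifs <;> omega
    · rw [glue_self]
      omega
    · have := hh.mem (v := v - k) (by omega) (by omega)
      rw [glue_of_lt_of_le hv.1 hv.2]
      omega
    · have := hg.mem (v := k + 1) (by omega) le_rfl
      have := hh.mem le_rfl (by omega)
      rw [glue_top hk]
      split_ifs <;> omega
  · rcases hv with rfl | hv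
    · rw [glue_of_le hk (Nat.zero_le k), hg.eq_self (.inl rfl), if_pos (Nat.zero_le k)]
    · exact glue_of_gt hk (by omega)

theorem glue_injective (hk : k ≤ n) {g' h' : ℕ → ℕ} (hg : IsSmoothPerm k g)
    (hh : IsSmoothPerm (n - k) h) (hg' : IsSmoothPerm k g') (hh' : IsSmoothPerm (n - k) h')
    (heq : glue n k g h = glue n k g' h') : g = g' ∧ h = h' := by
  have hh1 := hh.mem le_rfl (by omega)
  have hh1' := hh'.mem le_rfl (by omega)
  obtain rfl : g = g' := by
    funext u
    rcases (by omega : u = 0 ∨ k + 1 < u ∨ (1 ≤ u ∧ u ≤ k) ∨ u = k + 1) with hu | hu | hu | rfl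
    · rw [hg.eq_self (.inl hu), hg'.eq_self (.inl hu)]
    · rw [hg.eq_self (.inr hu), hg'.eq_self (.inr hu)]
    · have hu' := congrFun heq u
      rw [glue_of_le hk hu.2, glue_of_le hk hu.2] at hu'
      have := hg.mem hu.1 (by omega)
      have := hg'.mem hu.1 (by omega)
      split_ifs at hu' <;> omega
    · have hu' := congrFun heq (n + 2)
      rw [glue_top hk, glue_top hk] at hu'
      have := hg.mem (v := k + 1) (by omega) le_rfl
      have := hg'.mem (v := k + 1) (by omega) le_rfl
      split_ifs at hu' <;> omega
  refine ⟨rfl, funext fun x ↦ ?_⟩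
  rcases (by omega : x = 0 ∨ n - k + 1 < x ∨ (2 ≤ x ∧ x ≤ n - k + 1) ∨ x = 1) with hx | hx | hx | rfl
  · rw [hh.eq_self (.inl hx), hh'.eq_self (.inl hx)]
  · rw [hh.eq_self (.inr hx), hh'.eq_self (.inr hx)]
  · have := congrFun heq (x + k)
    rw [glue_of_lt_of_le (by omega) (by omega), glue_of_lt_of_le (by omega) (by omega),
      Nat.add_sub_cancel] at this
    omega
  · obtain ⟨u, hu1, hu2, hgu⟩ := hg.surj (w := k + 1) (by omega) le_rfl
    rcases (by omega : u ≤ k ∨ u = k + 1) with hu | rfl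
    · have hu' := congrFun heq u
      simp only [glue_of_le hk hu, hgu, show ¬k + 1 ≤ k by omega, if_false] at hu'
      omega
    · have hu' := congrFun heq (n + 2)
      simp only [glue_top hk, hgu, show ¬k + 1 ≤ k by omega, if_false] at hu'
      omega

end glue

section decomposition

variable {n k : ℕ} {f : ℕ → ℕ}

theorem IsSmoothPerm.le_apply_of_apply_eq (hf : IsSmoothPerm (n + 1) f)
    (hfk : f (k + 1) = n + 2) {v : ℕ} (h1 : k + 1 ≤ v) (h2 : v ≤ n + 1) : k + 1 ≤ f v := by
  rcases (by omega : v = k + 1 ∨ k + 1 < v) with rfl | hv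
  · omega
  by_contra hlt
  have := hf.mem (v := v) (by omega) (by omega)
  have := hf.le_of_le k v (by omega) (by omega) (by omega) (by omega)
  omega

/-- Inverse to `glue` when `f (k + 1) = n + 2`; the argument `e` of `rightPart` is the position
among `[1, k] ∪ {n + 2}` whose value exceeds `k`. -/
def leftPart (n k : ℕ) (f : ℕ → ℕ) (u : ℕ) : ℕ :=
  if 1 ≤ u ∧ u ≤ k + 1 then min (f (if u = k + 1 then n + 2 else u)) (k + 1) else u

def rightPart (n k : ℕ) (f : ℕ → ℕ) (e v : ℕ) : ℕ :=
  if v = 1 then f e - k else if 2 ≤ v ∧ v ≤ n - k + 1 then f (v + k) - k else v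

theorem leftPart_of_le {u : ℕ} (h1 : 1 ≤ u) (h2 : u ≤ k) :
    leftPart n k f u = min (f u) (k + 1) := by
  simp [leftPart, h1, show u ≤ k + 1 by omega, show u ≠ k + 1 by omega]

theorem leftPart_self : leftPart n k f (k + 1) = min (f (n + 2)) (k + 1) := by
  simp [leftPart]

theorem rightPart_one {e : ℕ} : rightPart n k f e 1 = f e - k := by simp [rightPart]

theorem rightPart_of_le {e v : ℕ} (h1 : 2 ≤ v) (h2 : v ≤ n - k + 1) :
    rightPart n k f e v = f (v + k) - k := by
  simp [rightPart, h1, h2, show v ≠ 1 by omega]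

theorem leftPart_of_le_succ {u : ℕ} (h1 : 1 ≤ u) (h2 : u ≤ k + 1) :
    leftPart n k f u = min (f (if u = k + 1 then n + 2 else u)) (k + 1) := by
  simp [leftPart, h1, h2]

variable (hf : IsSmoothPerm (n + 1) f) (hk : k ≤ n) (hfk : f (k + 1) = n + 2)
include hf hk hfk

theorem exists_leftPart_eq_succ : ∃ u, 1 ≤ u ∧ u ≤ k + 1 ∧ leftPart n k f u = k + 1 := by
  by_contra! hne
  -- otherwise `f` would send the `k + 1` positions `[1, k] ∪ {n + 2}` injectively into `[1, k]`
  have hmaps : Set.MapsTo (fun u ↦ f (if u = k + 1 then n + 2 else u))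
      (Icc 1 (k + 1) : Finset ℕ) (Icc 1 k : Finset ℕ) := by
    intro u hu
    simp only [coe_Icc, Set.mem_Icc] at hu ⊢
    have hlt := hne u hu.1 hu.2
    have := hf.mem (v := if u = k + 1 then n + 2 else u) (by split_ifs <;> omega)
      (by split_ifs <;> omega)
    rw [leftPart_of_le_succ hu.1 hu.2] at hlt
    omega
  have hinj : Set.InjOn (fun u ↦ f (if u = k + 1 then n + 2 else u))
      (Icc 1 (k + 1) : Finset ℕ) := by
    intro u hu u' hu' huu
    simp only [coe_Icc, Set.mem_Icc] at hu hu'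
    have := hf.inj (v := if u = k + 1 then n + 2 else u) (w := if u' = k + 1 then n + 2 else u')
      (by split_ifs <;> omega) (by split_ifs <;> omega) (by split_ifs <;> omega)
      (by split_ifs <;> omega) huu
    split_ifs at this <;> omega
  have := card_le_card_of_injOn _ hmaps hinj
  simp at this

theorem isSmoothPerm_leftPart : IsSmoothPerm k (leftPart n k f) := by
  refine .of_surjOn (fun u h1 h2 ↦ ?_) (fun w h1 h2 ↦ ?_) (fun u hu ↦ ?_)
    fun a b ha hab hb hfb ↦ ?_
  · have := hf.mem (v := if u = k + 1 then n + 2 else u) (by split_ifs <;> omega)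
      (by split_ifs <;> omega)
    rw [leftPart_of_le_succ h1 h2]
    omega
  · rcases (by omega : w ≤ k ∨ w = k + 1) with hw | rfl
    · obtain ⟨v, hv1, hv2, rfl⟩ := hf.surj h1 (by omega)
      have hvk : v ≤ k ∨ v = n + 2 := by
        by_contra hv
        have := hf.le_apply_of_apply_eq hfk (v := v) (by omega) (by omega)
        omega
      rcases hvk with hvk | rfl
      · exact ⟨v, hv1, by omega, by rw [leftPart_of_le hv1 hvk]; omega⟩
      · exact ⟨k + 1, by omega, le_rfl, by rw [leftPart_self]; omega⟩
    · exact exists_leftPart_eq_succ hf hk hfk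
  · simp only [leftPart]
    rw [if_neg (by omega)]
  · rw [leftPart_of_le (by omega) hb] at hfb
    have := hf.le_of_le a b ha hab (by omega) (by omega)
    rw [leftPart_of_le (by omega) (by omega)]
    omega

theorem exists_unique_succ_le_apply : ∃ e, (1 ≤ e ∧ e ≤ k ∨ e = n + 2) ∧ k + 1 ≤ f e ∧
    ∀ p, (1 ≤ p ∧ p ≤ k ∨ p = n + 2) → k + 1 ≤ f p → p = e := by
  have hg := isSmoothPerm_leftPart hf hk hfk
  obtain ⟨u, hu1, hu2, hgu⟩ := exists_leftPart_eq_succ hf hk hfk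
  have hlow : ∀ p, (1 ≤ p ∧ p ≤ k ∨ p = n + 2) → k + 1 ≤ f p →
      leftPart n k f (if p = n + 2 then k + 1 else p) = k + 1 := by
    rintro p (hp | rfl) hfp
    · rw [if_neg (by omega), leftPart_of_le hp.1 hp.2]
      omega
    · rw [if_pos rfl, leftPart_self]
      omega
  refine ⟨if u = k + 1 then n + 2 else u, ?_, ?_, fun p hp hfp ↦ ?_⟩
  · split_ifs <;> omega
  · rcases (by omega : u ≤ k ∨ u = k + 1) with hu | rfl
    · rw [leftPart_of_le hu1 hu] at hgu
      rw [if_neg (by omega)]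
      omega
    · rw [leftPart_self] at hgu
      rw [if_pos rfl]
      omega
  · have := hg.inj (v := if p = n + 2 then k + 1 else p) (by split_ifs <;> omega)
      (by split_ifs <;> omega) hu1 hu2 ((hlow p hp hfp).trans hgu.symm)
    split_ifs at this ⊢ <;> omega

variable {e : ℕ} (huniq : ∀ p, (1 ≤ p ∧ p ≤ k ∨ p = n + 2) → k + 1 ≤ f p → p = e)
include huniq

theorem isSmoothPerm_rightPart (he : 1 ≤ e ∧ e ≤ k ∨ e = n + 2) (hfe : k + 1 ≤ f e) :
    IsSmoothPerm (n - k) (rightPart n k f e) := by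
  have hfe' := hf.apply_lt_of_ne hfk (v := e) (by omega) (by omega) (by omega)
  refine .of_surjOn (fun v h1 h2 ↦ ?_) (fun w h1 h2 ↦ ?_) (fun v hv ↦ ?_)
    fun a b ha hab hb hfb ↦ ?_
  · rcases (by omega : v = 1 ∨ 2 ≤ v) with rfl | hv
    · rw [rightPart_one]
      omega
    · rw [rightPart_of_le hv h2]
      have := hf.apply_lt_of_ne hfk (v := v + k) (by omega) (by omega) (by omega)
      have := hf.le_apply_of_apply_eq hfk (v := v + k) (by omega) (by omega)
      omega
  · obtain ⟨p, hp1, hp2, hfp⟩ := hf.surj (w := w + k) (by omega) (by omega)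
    rcases (by omega : (1 ≤ p ∧ p ≤ k ∨ p = n + 2) ∨ p = k + 1 ∨ (k + 2 ≤ p ∧ p ≤ n + 1))
      with hp | rfl | hp
    · obtain rfl := huniq p hp (by omega)
      exact ⟨1, le_rfl, by omega, by rw [rightPart_one]; omega⟩
    · omega
    · refine ⟨p - k, by omega, by omega, ?_⟩
      rw [rightPart_of_le (by omega) (by omega), Nat.sub_add_cancel (by omega : k ≤ p)]
      omega
  · simp only [rightPart]
    rw [if_neg (by omega), if_neg (by omega)]
  · rw [rightPart_of_le (by omega) (by omega)] at hfb
    have := hf.le_apply_of_apply_eq hfk (v := b + k) (by omega) (by omega)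
    have := hf.le_of_le (a + k) (b + k) (by omega) (by omega) (by omega) (by omega)
    rw [rightPart_of_le (by omega) (by omega), show a + 1 + k = a + k + 1 by omega]
    omega

theorem eq_glue_leftPart_rightPart : f = glue n k (leftPart n k f) (rightPart n k f e) := by
  funext v
  rcases (by omega : v = 0 ∨ (1 ≤ v ∧ v ≤ k) ∨ v = k + 1 ∨ (k + 1 < v ∧ v ≤ n + 1) ∨
      v = n + 2 ∨ n + 2 < v) with rfl | hv | rfl | hv | rfl | hv
  · have h0 : leftPart n k f 0 = 0 := by simp [leftPart]
    rw [hf.eq_self (.inl rfl), glue_of_le hk (Nat.zero_le k), h0, if_pos (Nat.zero_le k)]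
  · rw [glue_of_le hk hv.2, leftPart_of_le hv.1 hv.2, rightPart_one]
    by_cases hfv : f v ≤ k
    · rw [if_pos (by omega)]
      omega
    · rw [if_neg (by omega), ← huniq v (.inl hv) (by omega)]
      omega
  · rw [hfk, glue_self]
  · rw [glue_of_lt_of_le hv.1 hv.2, rightPart_of_le (by omega) (by omega),
      Nat.sub_add_cancel (by omega : k ≤ v)]
    have := hf.le_apply_of_apply_eq hfk (v := v) (by omega) hv.2
    omega
  · rw [glue_top hk, leftPart_self, rightPart_one]
    by_cases hfv : f (n + 2) ≤ k
    · rw [if_pos (by omega)]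
      omega
    · rw [if_neg (by omega), ← huniq (n + 2) (.inr rfl) (by omega)]
      omega
  · rw [hf.eq_self (.inr (by omega)), glue_of_gt hk hv]

end decomposition

theorem IsSmoothPerm.exists_eq_glue {n k : ℕ} {f : ℕ → ℕ} (hf : IsSmoothPerm (n + 1) f)
    (hk : k ≤ n) (hfk : f (k + 1) = n + 2) :
    ∃ g h, IsSmoothPerm k g ∧ IsSmoothPerm (n - k) h ∧ f = glue n k g h := by
  obtain ⟨e, he, hfe, huniq⟩ := exists_unique_succ_le_apply hf hk hfk
  exact ⟨_, _, isSmoothPerm_leftPart hf hk hfk, isSmoothPerm_rightPart hf hk hfk huniq he hfe,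
    eq_glue_leftPart_rightPart hf hk hfk huniq⟩

theorem smoothPermCount_succ (n : ℕ) :
    smoothPermCount (n + 1) =
      smoothPermCount n + ∑ k ∈ range (n + 1), smoothPermCount k * smoothPermCount (n - k) := by
  let F : {f // IsSmoothPerm n f} → {f // IsSmoothPerm (n + 1) f} := fun f ↦
    ⟨f.1, (isSmoothPerm_succ_iff (f.2.eq_self (.inr (by omega)))).2 f.2⟩
  let G : (Σ k : Fin (n + 1), {g // IsSmoothPerm k g} × {h // IsSmoothPerm (n - k) h}) →
      {f // IsSmoothPerm (n + 1) f} := fun x ↦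
    ⟨glue n x.1 x.2.1 x.2.2, isSmoothPerm_glue (by omega) x.2.1.2 x.2.2.2⟩
  -- the position of `n + 2` tells which summand a permutation comes from
  have hpos : ∀ x, ∀ v, 1 ≤ v → v ≤ n + 2 → (G x).1 v = n + 2 → v = x.1 + 1 := fun x v h1 h2 hv ↦
    (G x).2.inj h1 h2 (by omega) (by omega) (hv.trans glue_self.symm)
  have hbij : Function.Bijective (Sum.elim F G) := by
    constructor
    · rintro (f | ⟨k, g, h⟩) (f' | ⟨k', g', h'⟩) hff'
      · exact congrArg Sum.inl (Subtype.ext (congrArg Subtype.val hff' :))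
      · have := hpos ⟨k', g', h'⟩ (n + 2) (by omega) le_rfl
          ((congrArg (fun f ↦ f.1 (n + 2)) hff').symm.trans (f.2.eq_self (.inr (by omega))))
        dsimp only at this
        omega
      · have := hpos ⟨k, g, h⟩ (n + 2) (by omega) le_rfl
          ((congrArg (fun f ↦ f.1 (n + 2)) hff').trans (f'.2.eq_self (.inr (by omega))))
        dsimp only at this
        omega
      · obtain rfl : k = k' := Fin.ext <| by
          have := hpos ⟨k', g', h'⟩ (k + 1) (by omega) (by omega)
            ((congrArg (fun f ↦ f.1 (k + 1)) hff').symm.trans glue_self)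
          dsimp only at this
          omega
        obtain ⟨hgg', hhh'⟩ := glue_injective (by omega) g.2 h.2 g'.2 h'.2
          (congrArg Subtype.val hff')
        rw [Subtype.ext hgg', Subtype.ext hhh']
    · rintro ⟨f, hf⟩
      obtain ⟨m, hm1, hm2, hfm⟩ := hf.surj (w := n + 2) (by omega) le_rfl
      rcases (by omega : m = n + 2 ∨ m ≤ n + 1) with rfl | hm
      · exact ⟨.inl ⟨f, (isSmoothPerm_succ_iff hfm).1 hf⟩, rfl⟩
      · obtain ⟨g, h, hg, hh, rfl⟩ := hf.exists_eq_glue (k := m - 1) (by omega)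
          (by rw [Nat.sub_add_cancel hm1]; exact hfm)
        exact ⟨.inr ⟨⟨m - 1, by omega⟩, ⟨g, hg⟩, ⟨h, hh⟩⟩, rfl⟩
  rw [smoothPermCount, ← Nat.card_congr (Equiv.ofBijective _ hbij), Nat.card_sum, Nat.card_sigma,
    ← Fin.sum_univ_eq_sum_range (fun k ↦ smoothPermCount k * smoothPermCount (n - k))]
  simp only [Nat.card_prod, smoothPermCount]

namespace SmoothCollection

def completion (n : ℕ) (S : ℕ → Finset ℕ) (i : ℕ) : Finset ℕ :=
  if i ≤ n then S i else Icc 1 (n + 1)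

/-- The least `i` with `v ∈ completion n S i`, counted as the number of earlier indices. -/
def entryTime (n : ℕ) (S : ℕ → Finset ℕ) (v : ℕ) : ℕ :=
  if 1 ≤ v ∧ v ≤ n + 1 then #{i ∈ range (n + 1) | v ∉ completion n S i} else v

def ofPerm (n : ℕ) (f : ℕ → ℕ) (i : ℕ) : Finset ℕ :=
  if 1 ≤ i ∧ i ≤ n then {v ∈ Icc 1 (n + 1) | f v ≤ i} else ∅

end SmoothCollection

open SmoothCollection

namespace IsSmooth

variable {n : ℕ} {S : ℕ → Finset ℕ} (hS : IsSmooth n S)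
include hS

theorem completion_zero : completion n S 0 = ∅ := by
  rw [completion, if_pos (Nat.zero_le n), hS.1 0 (.inl rfl)]

theorem completion_subset (i : ℕ) : completion n S i ⊆ Icc 1 (n + 1) := by
  unfold completion
  split_ifs with hi
  · rcases Nat.eq_zero_or_pos i with rfl | hi0
    · simp [hS.1 0 (.inl rfl)]
    · exact (hS.2.1 i hi0 hi).1
  · exact Subset.rfl

theorem monotone_completion : Monotone (completion n S) := by
  refine monotone_nat_of_le_succ fun i ↦ ?_
  rcases (by omega : i = 0 ∨ (1 ≤ i ∧ i < n) ∨ n ≤ i) with rfl | hi | hi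
  · simp [hS.completion_zero]
  · simp only [completion, if_pos hi.2.le, if_pos (show i + 1 ≤ n by omega)]
    exact hS.2.2.1 i hi.1 hi.2
  · rw [show completion n S (i + 1) = Icc 1 (n + 1) from if_neg (by omega)]
    exact hS.completion_subset i

theorem card_completion {i : ℕ} (hi : i ≤ n + 1) : #(completion n S i) = i := by
  rcases (by omega : i = 0 ∨ (1 ≤ i ∧ i ≤ n) ∨ i = n + 1) with rfl | hi | rfl
  · simp [hS.completion_zero]
  · rw [completion, if_pos hi.2, (hS.2.1 i hi.1 hi.2).2]
  · rw [completion, if_neg (by omega), Nat.card_Icc, Nat.add_sub_cancel]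

theorem entryTime_le_iff {v : ℕ} (hv1 : 1 ≤ v) (hv2 : v ≤ n + 1) (i : ℕ) :
    entryTime n S v ≤ i ↔ v ∈ completion n S i := by
  rw [entryTime, if_pos ⟨hv1, hv2⟩]
  refine card_filter_range_not_le_iff (fun _ _ hij hv ↦ hS.monotone_completion hij hv) ?_ i
  rw [completion, if_neg (by omega)]
  simp [hv1, hv2]

theorem isSmoothPerm_entryTime : IsSmoothPerm n (entryTime n S) := by
  refine .of_surjOn (fun v h1 h2 ↦ ?_) (fun s h1 h2 ↦ ?_) (fun v hv ↦ ?_)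
    fun a b ha hab hb hfb ↦ ?_
  · have hle := (hS.entryTime_le_iff h1 h2 (n + 1)).2 (by simp [completion, h1, h2])
    have hpos := (hS.entryTime_le_iff h1 h2 0).not.2 (by simp [hS.completion_zero])
    omega
  · obtain ⟨v, hvs, hvs'⟩ := exists_mem_notMem_of_card_lt_card
      (s := completion n S (s - 1)) (t := completion n S s)
      (by rw [hS.card_completion h2, hS.card_completion (by omega)]; omega)
    have hv := mem_Icc.1 (hS.completion_subset s hvs)
    have := (hS.entryTime_le_iff hv.1 hv.2 s).2 hvs
    have := (hS.entryTime_le_iff hv.1 hv.2 (s - 1)).not.2 hvs'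
    exact ⟨v, hv.1, hv.2, by omega⟩
  · rw [entryTime, if_neg (by omega)]
  · have hcomp : ∀ i, 1 ≤ i → i ≤ n → completion n S i = S i := fun i _ hi ↦ if_pos hi
    rw [hS.entryTime_le_iff (by omega) (by omega), hcomp a ha (by omega)] at hfb
    rw [hS.entryTime_le_iff (by omega) (by omega), hcomp b (by omega) hb]
    exact hS.2.2.2 a b ha hab hb hfb

end IsSmooth

theorem IsSmoothPerm.isSmooth_ofPerm {n : ℕ} {f : ℕ → ℕ} (hf : IsSmoothPerm n f) :
    IsSmooth n (ofPerm n f) := by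
  have hof : ∀ i, 1 ≤ i → i ≤ n → ofPerm n f i = {v ∈ Icc 1 (n + 1) | f v ≤ i} :=
    fun i h1 h2 ↦ if_pos ⟨h1, h2⟩
  refine ⟨fun i hi ↦ if_neg (by omega), fun i h1 h2 ↦ ⟨?_, ?_⟩, fun i h1 h2 v ↦ ?_,
    fun a b ha hab hb ↦ ?_⟩
  · rw [hof i h1 h2]
    exact filter_subset _ _
  · rw [hof i h1 h2]
    calc #{v ∈ Icc 1 (n + 1) | f v ≤ i} = #(Icc 1 i) := by
          refine card_nbij f (fun v hv ↦ ?_) (fun v hv w hw ↦ ?_) fun w hw ↦ ?_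
          · rw [mem_coe, mem_filter, mem_Icc] at hv
            exact mem_Icc.2 ⟨(hf.mem hv.1.1 hv.1.2).1, hv.2⟩
          · rw [mem_coe, mem_filter, mem_Icc] at hv hw
            exact hf.inj hv.1.1 hv.1.2 hw.1.1 hw.1.2
          · rw [coe_Icc, Set.mem_Icc] at hw
            obtain ⟨v, hv1, hv2, rfl⟩ := hf.surj hw.1 (by omega)
            exact ⟨v, by simp [hv1, hv2, hw.2], rfl⟩
      _ = i := by simp
  · rw [hof i h1 h2.le, hof (i + 1) (by omega) h2, mem_filter, mem_filter]
    exact fun hv ↦ ⟨hv.1, by omega⟩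
  · rw [hof a ha (by omega), hof b (by omega) hb, mem_filter, mem_filter, mem_Icc, mem_Icc]
    exact fun hbS ↦ ⟨by omega, hf.le_of_le a b ha hab hb hbS.2⟩

theorem IsSmooth.ofPerm_entryTime {n : ℕ} {S : ℕ → Finset ℕ} (hS : IsSmooth n S) :
    ofPerm n (entryTime n S) = S := by
  funext i
  by_cases hi : 1 ≤ i ∧ i ≤ n
  · have hcomp : completion n S i = S i := if_pos hi.2
    ext v
    simp only [ofPerm, if_pos hi, mem_filter, mem_Icc]
    constructor
    · rintro ⟨hv, hvi⟩
      rw [← hcomp]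
      exact (hS.entryTime_le_iff hv.1 hv.2 i).1 hvi
    · intro hv
      have hv' := mem_Icc.1 ((hS.2.1 i hi.1 hi.2).1 hv)
      exact ⟨hv', (hS.entryTime_le_iff hv'.1 hv'.2 i).2 (hcomp ▸ hv)⟩
  · rw [ofPerm, if_neg hi, hS.1 i (by omega)]

theorem IsSmoothPerm.entryTime_ofPerm {n : ℕ} {f : ℕ → ℕ} (hf : IsSmoothPerm n f) :
    entryTime n (ofPerm n f) = f := by
  funext v
  by_cases hv : 1 ≤ v ∧ v ≤ n + 1
  · refine eq_of_forall_ge_iff fun i ↦ ?_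
    have hfv := hf.mem hv.1 hv.2
    rw [hf.isSmooth_ofPerm.entryTime_le_iff hv.1 hv.2]
    rcases (by omega : i = 0 ∨ (1 ≤ i ∧ i ≤ n) ∨ n < i) with rfl | hi | hi
    · simp [completion, ofPerm]
      omega
    · simp [completion, ofPerm, hi, hv]
    · simp [completion, show ¬i ≤ n by omega, hv]
      omega
  · exact (if_neg hv).trans (hf.eq_self (by omega)).symm

def smoothEquiv (n : ℕ) : {S // IsSmooth n S} ≃ {f // IsSmoothPerm n f} where
  toFun S := ⟨entryTime n S, S.2.isSmoothPerm_entryTime⟩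
  invFun f := ⟨ofPerm n f, f.2.isSmooth_ofPerm⟩
  left_inv S := Subtype.ext S.2.ofPerm_entryTime
  right_inv f := Subtype.ext f.2.entryTime_ofPerm

theorem ncard_setOf_isSmooth (n : ℕ) : {S | IsSmooth n S}.ncard = smoothPermCount n := by
  rw [← Nat.card_coe_set_eq]
  exact Nat.card_congr (smoothEquiv n)

theorem smoothPermCount_eq {r : ℕ → ℕ} (h0 : r 0 = 1)
    (hrec : ∀ n, 1 ≤ n → r n = r (n - 1) + ∑ k ∈ range n, r k * r (n - 1 - k)) (n : ℕ) :
    smoothPermCount n = r n := by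
  induction n using Nat.strong_induction_on with
  | _ n ih =>
    rcases n with _ | n
    · rw [smoothPermCount_zero, h0]
    · rw [smoothPermCount_succ, hrec (n + 1) (by omega), Nat.add_sub_cancel, ih n (by omega)]
      exact congrArg _ (sum_congr rfl fun k hk ↦ by
        rw [ih k (by simp at hk; omega), ih (n - k) (by omega)])

/-- The number of smooth collections of length `n` is the `n`-th large Schröder number;
in particular it is `2, 6, 22, 90` for `n = 1, 2, 3, 4`. -/
theorem stmt_5 (r : ℕ → ℕ) (h0 : r 0 = 1)
    (hrec : ∀ n, 1 ≤ n → r n = r (n - 1) + ∑ k ∈ Finset.range n, r k * r (n - 1 - k)) :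
    (∀ n, Set.ncard {S : ℕ → Finset ℕ | IsSmooth n S} = r n) ∧
    Set.ncard {S : ℕ → Finset ℕ | IsSmooth 1 S} = 2 ∧
    Set.ncard {S : ℕ → Finset ℕ | IsSmooth 2 S} = 6 ∧
    Set.ncard {S : ℕ → Finset ℕ | IsSmooth 3 S} = 22 ∧
    Set.ncard {S : ℕ → Finset ℕ | IsSmooth 4 S} = 90 := by
  have hr : ∀ n, Set.ncard {S : ℕ → Finset ℕ | IsSmooth n S} = r n := fun n ↦
    (ncard_setOf_isSmooth n).trans (smoothPermCount_eq h0 hrec n)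
  have r1 : r 1 = 2 := by simp [hrec 1, h0]
  have r2 : r 2 = 6 := by simp [hrec 2, sum_range_succ, h0, r1]
  have r3 : r 3 = 22 := by simp [hrec 3, sum_range_succ, h0, r1, r2]
  have r4 : r 4 = 90 := by simp [hrec 4, sum_range_succ, h0, r1, r2, r3]
  exact ⟨hr, by rw [hr, r1], by rw [hr, r2], by rw [hr, r3], by rw [hr, r4]⟩
end

section
/- Let the map σ send a collection S = (S_1,...,S_n) of subsets of {1,...,n+1} to (wS_1,...,wS_n), where w is the transposition of {1,...,n+1} exchanging 1 and n+1 and fixing all other elements. Then σ maps smooth collections to smooth collections, σ² is the identity, and σ has no fixed points on the set of smooth collections. -/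
/-- The transposition of `{1, ..., n+1}` exchanging `1` and `n+1`. -/
def wTrans (n : ℕ) (x : ℕ) : ℕ :=
  if x = 1 then n + 1 else if x = n + 1 then 1 else x

/-- The involution `σ` on collections, applying `wTrans n` to every subset. -/
def sigmaColl (n : ℕ) (S : ℕ → Finset ℕ) : ℕ → Finset ℕ :=
  fun i => (S i).image (wTrans n)

/-!
Since `w` fixes `2, …, n`, and the smoothness condition `b ∈ S a → a + 1 ∈ S b` only
involves elements `b, a + 1` of `{2, …, n}`, applying `w` preserves smoothness.
If `wS_i = S_i` for all `i`, then each `S_i` contains either both of `1, n + 1` or neither.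
But `S_0 = ∅` misses `1`, while `S_n`, missing only one point of `{1, …, n + 1}`, contains one
of `1, n + 1` and hence both. So at some step `S_m ⊂ S_{m+1}` both `1` and `n + 1` would be
added, although the cardinality grows by only one.
-/

open Finset

lemma Finset.mem_or_mem_of_subset_of_card_eq_add_one {α : Type*} [DecidableEq α]
    {s t : Finset α} {x y : α} (hst : s ⊆ t) (hcard : #t = #s + 1) (hxy : x ≠ y)
    (hx : x ∈ t) (hy : y ∈ t) : x ∈ s ∨ y ∈ s := by
  by_contra! hxys
  have hdiff : #(t \ s) ≤ 1 := by rw [card_sdiff_of_subset hst]; omega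
  exact hxy (card_le_one.mp hdiff x (mem_sdiff.mpr ⟨hx, hxys.1⟩) y (mem_sdiff.mpr ⟨hy, hxys.2⟩))

section Transposition

variable {n x : ℕ}

lemma wTrans_involutive (n : ℕ) : Function.Involutive (wTrans n) := by
  intro x
  unfold wTrans
  split_ifs <;> omega

lemma wTrans_one (n : ℕ) : wTrans n 1 = n + 1 := if_pos rfl

lemma wTrans_add_one (n : ℕ) : wTrans n (n + 1) = 1 := by
  unfold wTrans
  split_ifs <;> omega

lemma wTrans_of_ne (h1 : x ≠ 1) (h2 : x ≠ n + 1) : wTrans n x = x := by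
  simp [wTrans, h1, h2]

lemma wTrans_mem_Icc (hx : x ∈ Icc 1 (n + 1)) : wTrans n x ∈ Icc 1 (n + 1) := by
  rw [mem_Icc] at hx ⊢
  unfold wTrans
  split_ifs <;> omega

lemma mem_sigmaColl {S : ℕ → Finset ℕ} {i : ℕ} :
    x ∈ sigmaColl n S i ↔ wTrans n x ∈ S i := by
  simp only [sigmaColl, mem_image]
  constructor
  · rintro ⟨y, hy, rfl⟩
    rwa [wTrans_involutive]
  · exact fun hx => ⟨_, hx, wTrans_involutive n x⟩

lemma sigmaColl_sigmaColl (n : ℕ) (S : ℕ → Finset ℕ) : sigmaColl n (sigmaColl n S) = S := by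
  funext i
  ext x
  rw [mem_sigmaColl, mem_sigmaColl, wTrans_involutive]

end Transposition

namespace IsSmooth

variable {n : ℕ} {S : ℕ → Finset ℕ}

lemma subset_add_one (hS : IsSmooth n S) {i : ℕ} (hi : i < n) : S i ⊆ S (i + 1) := by
  rcases Nat.eq_zero_or_pos i with rfl | hi0
  · rw [hS.1 0 (Or.inl rfl)]
    exact empty_subset _
  · exact hS.2.2.1 i hi0 hi

lemma one_mem_or_mem_last (hS : IsSmooth n S) (hn : 1 ≤ n) : 1 ∈ S n ∨ n + 1 ∈ S n := by
  by_contra! hmiss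
  have hsub : S n ⊆ Icc 2 n := fun x hx => by
    have := mem_Icc.mp ((hS.2.1 n hn le_rfl).1 hx)
    have : x ≠ 1 := fun h => hmiss.1 (h ▸ hx)
    have : x ≠ n + 1 := fun h => hmiss.2 (h ▸ hx)
    rw [mem_Icc]
    omega
  have := card_le_card hsub
  rw [hS.card_eq le_rfl, Nat.card_Icc] at this
  omega

protected lemma sigmaColl (hS : IsSmooth n S) : IsSmooth n (sigmaColl n S) := by
  obtain ⟨hempty, hrange, hmono, hsmooth⟩ := hS
  have hw_fix : ∀ {x}, 2 ≤ x → x ≤ n → wTrans n x = x := fun h2 hn =>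
    wTrans_of_ne (by omega) (by omega)
  refine ⟨fun i hi => ?_, fun i hi1 hin => ⟨?_, ?_⟩, fun i hi1 hin => ?_,
    fun a b ha hab hbn hb => ?_⟩
  · simp [sigmaColl, hempty i hi]
  · intro x hx
    rw [mem_sigmaColl] at hx
    simpa only [wTrans_involutive n x] using wTrans_mem_Icc ((hrange i hi1 hin).1 hx)
  · rw [sigmaColl, card_image_of_injective _ (wTrans_involutive n).injective]
    exact (hrange i hi1 hin).2
  · exact image_subset_image (hmono i hi1 hin)
  · rw [mem_sigmaColl, hw_fix (by omega) hbn] at hb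
    rw [mem_sigmaColl, hw_fix (by omega) (by omega)]
    exact hsmooth a b ha hab hbn hb

lemma sigmaColl_ne (hS : IsSmooth n S) (hn : 1 ≤ n) : sigmaColl n S ≠ S := by
  intro hS_fixed
  have hw : ∀ i x, x ∈ S i ↔ wTrans n x ∈ S i := fun i x => by
    rw [← mem_sigmaColl, hS_fixed]
  have hsymm : ∀ i, 1 ∈ S i ↔ n + 1 ∈ S i := fun i => by rw [hw i 1, wTrans_one]
  obtain ⟨m, hm, hm1⟩ := Nat.exists_not_and_succ_of_not_zero_of_exists (p := (1 ∈ S ·))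
    (by simp [hS.1 0 (Or.inl rfl)])
    ⟨n, (hS.one_mem_or_mem_last hn).elim id (hsymm n).mpr⟩
  have hmn : m < n := by
    by_contra! h
    simp [hS.1 (m + 1) (Or.inr (by omega))] at hm1
  have hcard : #(S (m + 1)) = #(S m) + 1 := by rw [hS.card_eq hmn, hS.card_eq hmn.le]
  rcases mem_or_mem_of_subset_of_card_eq_add_one (hS.subset_add_one hmn) hcard
      (show 1 ≠ n + 1 by omega) hm1 ((hsymm _).mp hm1) with h | h
  · exact hm h
  · exact hm ((hsymm m).mpr h)

end IsSmooth

/-- `σ` maps smooth collections to smooth collections, is an involution, and has no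
fixed points among smooth collections. -/
theorem stmt_6 (n : ℕ) (hn : 1 ≤ n) (S : ℕ → Finset ℕ) (hS : IsSmooth n S) :
    IsSmooth n (sigmaColl n S) ∧ sigmaColl n (sigmaColl n S) = S ∧ sigmaColl n S ≠ S :=
  ⟨hS.sigmaColl, sigmaColl_sigmaColl n S, hS.sigmaColl_ne hn⟩
end

section
/- For a smooth collection S of length n, define π ∈ Sym({1,...,n+1}) by letting π(m) be the unique element of S_m \ S_{m-1} (with S_0 = ∅ and S_{n+1} = {1,...,n+1}). This map is a bijection from smooth collections of length n onto the set of permutations π of {1,...,n+1} satisfying: for all 1 ≤ a < b ≤ n, if π⁻¹(b) ≤ a then π⁻¹(a+1) ≤ b. -/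
/-- The extended chain: `E S 0 = ∅`, `E S m = S m` for `1 ≤ m ≤ n`, and
`E S m = {1, ..., n+1}` for `m > n`. -/
def extColl (n : ℕ) (S : ℕ → Finset ℕ) (m : ℕ) : Finset ℕ :=
  if m = 0 then ∅ else if m ≤ n then S m else Finset.Icc 1 (n + 1)

/-- The permutation attached to a smooth collection: `π(m)` is the unique element of
`S m \ S (m-1)` (realized as the sum over the singleton difference), and `0` outside
`{1, ..., n+1}`. -/
def piOf (n : ℕ) (S : ℕ → Finset ℕ) (m : ℕ) : ℕ :=
  if 1 ≤ m ∧ m ≤ n + 1 then ∑ x ∈ extColl n S m \ extColl n S (m - 1), x else 0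

/-- Permutations `π` of `{1, ..., n+1}` (extended by `0` elsewhere) such that for all
`1 ≤ a < b ≤ n`, `π⁻¹(b) ≤ a` implies `π⁻¹(a+1) ≤ b`. -/
def GoodPerm (n : ℕ) (p : ℕ → ℕ) : Prop :=
  Set.BijOn p (Set.Icc 1 (n + 1)) (Set.Icc 1 (n + 1)) ∧
  (∀ m, m ∉ Set.Icc 1 (n + 1) → p m = 0) ∧
  (∀ a b, 1 ≤ a → a < b → b ≤ n →
    (∃ x, 1 ≤ x ∧ x ≤ a ∧ p x = b) → (∃ y, 1 ≤ y ∧ y ≤ b ∧ p y = a + 1))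

/-!
A smooth collection grows by exactly one element at each step of the chain
`∅ = S₀ ⊆ S₁ ⊆ ⋯ ⊆ Sₙ ⊆ Sₙ₊₁ = {1, …, n+1}`, so `S m = π({1, …, m})`; conversely every
permutation `π` gives the chain `m ↦ π({1, …, m})`. Under this dictionary `b ∈ S a` reads
`π⁻¹(b) ≤ a`, so smoothness of `S` is exactly the condition on `π`, and the two constructions
are mutually inverse.
-/

open Finset

namespace Finset

variable {α : Type*} [DecidableEq α]

theorem eq_image_Icc_of_succ_sdiff {E : ℕ → Finset α} {f : ℕ → α} {N : ℕ} (h0 : E 0 = ∅)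
    (hstep : ∀ m < N, E m ⊆ E (m + 1) ∧ E (m + 1) \ E m = {f (m + 1)}) :
    ∀ m ≤ N, E m = (Icc 1 m).image f := by
  intro m hm
  induction m with
  | zero => simp [h0]
  | succ m ih =>
    obtain ⟨hsub, hdiff⟩ := hstep m hm
    rw [← union_sdiff_of_subset hsub, hdiff, ih (by omega),
      ← insert_Icc_right_eq_Icc_add_one (by omega), image_insert, union_comm, insert_eq]

theorem image_Icc_succ_sdiff {p : ℕ → α} {m : ℕ} (hp : Set.InjOn p (Set.Icc 1 (m + 1))) :
    (Icc 1 (m + 1)).image p \ (Icc 1 m).image p = {p (m + 1)} := by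
  have hnew : p (m + 1) ∉ (Icc 1 m).image p := by
    simp only [mem_image, mem_Icc]
    rintro ⟨i, ⟨hi1, him⟩, hpi⟩
    have := hp ⟨hi1, by omega⟩ ⟨by omega, le_rfl⟩ hpi
    omega
  rw [← insert_Icc_right_eq_Icc_add_one (by omega), image_insert, insert_sdiff_of_notMem _ hnew,
    sdiff_self, bot_eq_empty, insert_empty]

theorem bijOn_of_image_eq {f : α → α} {s : Finset α} (h : s.image f = s) :
    Set.BijOn f s s := by
  refine ⟨?_, card_image_iff.mp (by rw [h]), ?_⟩
  · rw [Set.mapsTo_iff_image_subset, ← coe_image, h]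
  · rw [Set.SurjOn, ← coe_image, h]

end Finset

def collOfPerm (n : ℕ) (p : ℕ → ℕ) (m : ℕ) : Finset ℕ :=
  if 1 ≤ m ∧ m ≤ n then (Icc 1 m).image p else ∅

theorem extColl_eq_of_le {n m : ℕ} (S : ℕ → Finset ℕ) (hm : 1 ≤ m) (hmn : m ≤ n) :
    extColl n S m = S m := by
  rw [extColl, if_neg (by omega), if_pos hmn]

namespace IsSmooth

variable {n : ℕ} {S : ℕ → Finset ℕ}

theorem extColl_subset_Icc (hS : IsSmooth n S) (m : ℕ) : extColl n S m ⊆ Icc 1 (n + 1) := by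
  unfold extColl
  split_ifs with h0 hmn
  · exact empty_subset _
  · exact (hS.2.1 m (by omega) hmn).1
  · exact Subset.rfl

theorem card_extColl (hS : IsSmooth n S) {m : ℕ} (hm : m ≤ n + 1) : #(extColl n S m) = m := by
  unfold extColl
  split_ifs with h0 hmn
  · simp [h0]
  · exact (hS.2.1 m (by omega) hmn).2
  · simp only [Nat.card_Icc]
    omega

theorem extColl_subset_succ (hS : IsSmooth n S) (m : ℕ) :
    extColl n S m ⊆ extColl n S (m + 1) := by
  rcases Nat.eq_zero_or_pos m with rfl | hm
  · simp [extColl]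
  by_cases hmn : m + 1 ≤ n
  · rw [extColl_eq_of_le S hm (by omega), extColl_eq_of_le S (by omega) hmn]
    exact hS.2.2.1 m hm hmn
  · rw [show extColl n S (m + 1) = Icc 1 (n + 1) by simp [extColl, hmn]]
    exact hS.extColl_subset_Icc m

theorem extColl_succ_sdiff (hS : IsSmooth n S) {m : ℕ} (hm : m ≤ n) :
    extColl n S (m + 1) \ extColl n S m = {piOf n S (m + 1)} := by
  obtain ⟨x, hx⟩ : ∃ x, extColl n S (m + 1) \ extColl n S m = {x} := card_eq_one.mp <| by
    rw [card_sdiff_of_subset (hS.extColl_subset_succ m), hS.card_extColl (by omega),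
      hS.card_extColl (by omega)]
    omega
  rw [hx, piOf, if_pos (by omega), Nat.add_sub_cancel, hx, sum_singleton]

theorem extColl_eq_image (hS : IsSmooth n S) {m : ℕ} (hm : m ≤ n + 1) :
    extColl n S m = (Icc 1 m).image (piOf n S) :=
  eq_image_Icc_of_succ_sdiff (by simp [extColl])
    (fun k hk => ⟨hS.extColl_subset_succ k, hS.extColl_succ_sdiff (by omega)⟩) m hm

theorem mem_iff_exists_piOf (hS : IsSmooth n S) {a b : ℕ} (ha : 1 ≤ a) (han : a ≤ n) :
    b ∈ S a ↔ ∃ x, 1 ≤ x ∧ x ≤ a ∧ piOf n S x = b := by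
  rw [← extColl_eq_of_le S ha han, hS.extColl_eq_image (by omega)]
  simp only [mem_image, mem_Icc, and_assoc]

theorem goodPerm_piOf (hS : IsSmooth n S) : GoodPerm n (piOf n S) := by
  have himage : (Icc 1 (n + 1)).image (piOf n S) = Icc 1 (n + 1) := by
    rw [← hS.extColl_eq_image le_rfl, extColl, if_neg (by omega), if_neg (by omega)]
  refine ⟨by simpa using bijOn_of_image_eq himage,
    fun m hm => if_neg (by simpa using hm), fun a b ha hab hbn hb => ?_⟩
  rw [← hS.mem_iff_exists_piOf ha (by omega)] at hb
  exact (hS.mem_iff_exists_piOf (by omega) hbn).mp (hS.2.2.2 a b ha hab hbn hb)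

theorem collOfPerm_piOf (hS : IsSmooth n S) :
    collOfPerm n (piOf n S) = S := by
  funext m
  unfold collOfPerm
  split_ifs with hm
  · rw [← hS.extColl_eq_image (by omega), extColl_eq_of_le S hm.1 hm.2]
  · exact (hS.1 m (by omega)).symm

end IsSmooth

namespace GoodPerm

variable {n : ℕ} {p : ℕ → ℕ}

theorem injOn_Icc (hp : GoodPerm n p) {m : ℕ} (hm : m ≤ n + 1) : Set.InjOn p (Set.Icc 1 m) :=
  hp.1.injOn.mono (Set.Icc_subset_Icc_right hm)

theorem card_image_Icc (hp : GoodPerm n p) {m : ℕ} (hm : m ≤ n + 1) :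
    #((Icc 1 m).image p) = m := by
  rw [card_image_of_injOn (by simpa using hp.injOn_Icc hm), Nat.card_Icc]
  omega

theorem image_Icc_subset (hp : GoodPerm n p) {m : ℕ} (hm : m ≤ n + 1) :
    (Icc 1 m).image p ⊆ Icc 1 (n + 1) := by
  rw [← coe_subset, coe_image, coe_Icc, coe_Icc]
  exact (hp.1.mapsTo.mono_left (Set.Icc_subset_Icc_right hm)).image_subset

theorem isSmooth_collOfPerm (hp : GoodPerm n p) : IsSmooth n (collOfPerm n p) := by
  refine ⟨fun i hi => if_neg (by omega), fun i hi hin => ?_, fun i hi hin => ?_,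
    fun a b ha hab hbn hb => ?_⟩
  · rw [collOfPerm, if_pos ⟨hi, hin⟩]
    exact ⟨hp.image_Icc_subset (by omega), hp.card_image_Icc (by omega)⟩
  · rw [collOfPerm, collOfPerm, if_pos ⟨hi, by omega⟩, if_pos ⟨by omega, hin⟩]
    exact image_subset_image (Icc_subset_Icc_right (by omega))
  · rw [collOfPerm, if_pos ⟨ha, by omega⟩] at hb
    rw [collOfPerm, if_pos ⟨by omega, hbn⟩]
    simp only [mem_image, mem_Icc, and_assoc] at hb ⊢
    exact hp.2.2 a b ha hab hbn hb

theorem extColl_collOfPerm (hp : GoodPerm n p) {m : ℕ} (hm : m ≤ n + 1) :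
    extColl n (collOfPerm n p) m = (Icc 1 m).image p := by
  rcases Nat.eq_zero_or_pos m with rfl | hm0
  · simp [extColl]
  by_cases hmn : m ≤ n
  · rw [extColl_eq_of_le _ hm0 hmn, collOfPerm, if_pos ⟨hm0, hmn⟩]
  · rw [extColl, if_neg (by omega), if_neg hmn]
    refine (eq_of_subset_of_card_le (hp.image_Icc_subset hm) ?_).symm
    rw [hp.card_image_Icc hm, Nat.card_Icc]
    omega

theorem piOf_collOfPerm (hp : GoodPerm n p) : piOf n (collOfPerm n p) = p := by
  funext m
  by_cases hm : 1 ≤ m ∧ m ≤ n + 1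
  · obtain ⟨k, rfl⟩ := Nat.exists_eq_add_of_le' hm.1
    rw [piOf, if_pos hm, Nat.add_sub_cancel, hp.extColl_collOfPerm hm.2,
      hp.extColl_collOfPerm (by omega), image_Icc_succ_sdiff (hp.injOn_Icc hm.2), sum_singleton]
  · rw [piOf, if_neg hm, hp.2.1 m (by simpa using hm)]

end GoodPerm

/-- For a smooth collection `S`, each difference `S m \ S (m-1)` is the singleton
`{π(m)}`, and `S ↦ π` is a bijection from smooth collections of length `n` onto the
set of permutations `π` of `{1, ..., n+1}` such that for all `1 ≤ a < b ≤ n`,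
`π⁻¹(b) ≤ a` implies `π⁻¹(a+1) ≤ b`. -/
theorem stmt_8 (n : ℕ) :
    (∀ S : ℕ → Finset ℕ, IsSmooth n S → ∀ m, 1 ≤ m → m ≤ n + 1 →
      extColl n S m \ extColl n S (m - 1) = {piOf n S m}) ∧
    Set.BijOn (piOf n) {S : ℕ → Finset ℕ | IsSmooth n S} {p : ℕ → ℕ | GoodPerm n p} := by
  refine ⟨fun S hS m hm hmn => ?_, ?_⟩
  · obtain ⟨k, rfl⟩ := Nat.exists_eq_add_of_le' hm
    rw [Nat.add_sub_cancel]
    exact hS.extColl_succ_sdiff (by omega)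
  · exact Set.InvOn.bijOn (f' := collOfPerm n)
      ⟨fun _ => IsSmooth.collOfPerm_piOf, fun _ => GoodPerm.piOf_collOfPerm⟩
      (fun _ => IsSmooth.goodPerm_piOf) (fun _ => GoodPerm.isSmooth_collOfPerm)
end

section
/- For every n ≥ 1, the q-Schröder polynomial r_n(q) = Σ_P q^{diag(P)} (sum over Schröder paths of size n, diag(P) the number of diagonal steps) is divisible by 1+q in Z[q]. -/
/-!
Evaluate at `q = -1`. Toggling the first site where the path has either a diagonal step `D` or an
east step immediately followed by a north step (`D ↦ EN`, `EN ↦ D`) keeps a Schröder path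
a Schröder path, is undone by toggling again, and changes the number of diagonal steps by one.
So the paths cancel in pairs in `r_n(-1) = ∑_P (-1)^(diag P)`. A toggle site exists as soon as
`n ≥ 1`: a path without one has the shape `N^i E^j`, which stays below the diagonal only for
`i = 0`, and then it never rises.
-/

open Polynomial in
/-- A Schröder path of size `n`: a lattice path from `(0,0)` to `(n,n)` with steps
`(1,0)`, `(0,1)`, `(1,1)`, staying weakly below the diagonal. -/
def IsSchroederPath (n : ℕ) (P : List (ℕ × ℕ)) : Prop :=
  (∀ s ∈ P, s = (1, 0) ∨ s = (0, 1) ∨ s = (1, 1)) ∧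
  (∀ k ≤ P.length, ((P.take k).map Prod.snd).sum ≤ ((P.take k).map Prod.fst).sum) ∧
  (P.map Prod.fst).sum = n ∧ (P.map Prod.snd).sum = n

/-- The number of diagonal `(1,1)` steps of a path. -/
def diagSteps (P : List (ℕ × ℕ)) : ℕ := (P.filter (fun s => s = (1, 1))).length

open Polynomial in
/-- The `q`-Schröder polynomial `r_n(q) = ∑_P q^(diag P)`, summed over all Schröder
paths of size `n`. -/
noncomputable def schroederPoly (n : ℕ) : Polynomial ℤ :=
  ∑ᶠ (P : List (ℕ × ℕ)) (_ : IsSchroederPath n P), X ^ diagSteps P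

def toggle : List (ℕ × ℕ) → List (ℕ × ℕ)
  | [] => []
  | (1, 1) :: t => (1, 0) :: (0, 1) :: t
  | (1, 0) :: (0, 1) :: t => (1, 1) :: t
  | s :: t => s :: toggle t

def HasToggleSite : List (ℕ × ℕ) → Prop
  | [] => False
  | (1, 1) :: _ => True
  | (1, 0) :: (0, 1) :: _ => True
  | _ :: t => HasToggleSite t

lemma HasToggleSite.cons (s : ℕ × ℕ) {t : List (ℕ × ℕ)} (h : HasToggleSite t) :
    HasToggleSite (s :: t) := by
  rw [HasToggleSite.eq_def]
  split <;> simp_all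

lemma exists_eq_north_cons_of_toggle_eq {t t₁ : List (ℕ × ℕ)} (h : toggle t = (0, 1) :: t₁) :
    ∃ t₂, t = (0, 1) :: t₂ := by
  rw [toggle.eq_def] at h
  split at h <;> simp_all [Prod.ext_iff]

lemma toggle_toggle {l : List (ℕ × ℕ)} (h : HasToggleSite l) : toggle (toggle l) = l := by
  induction l using toggle.induct with
  | case1 => exact h.elim
  | case2 t => rfl
  | case3 t => rfl
  | case4 s t hD hEN ih =>
    rw [HasToggleSite.eq_4 s t hD hEN] at h
    -- no new `EN` site appears in front: `toggle t` starts with `N` only if `t` does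
    have hEN' : ∀ t₁, s = (1, 0) → toggle t = (0, 1) :: t₁ → False := fun t₁ hs ht =>
      (exists_eq_north_cons_of_toggle_eq ht).elim fun t₂ ht₂ => hEN t₂ hs ht₂
    rw [toggle.eq_4 s t hD hEN, toggle.eq_4 s (toggle t) hD hEN', ih h]

lemma diagSteps_cons_diag (t : List (ℕ × ℕ)) : diagSteps ((1, 1) :: t) = diagSteps t + 1 := by
  simp [diagSteps]

lemma diagSteps_cons_of_ne {s : ℕ × ℕ} (t : List (ℕ × ℕ)) (h : s ≠ (1, 1)) :
    diagSteps (s :: t) = diagSteps t := by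
  simp [diagSteps, h]

lemma neg_one_pow_diagSteps_toggle {R : Type*} [Monoid R] [HasDistribNeg R]
    {l : List (ℕ × ℕ)} (h : HasToggleSite l) :
    (-1 : R) ^ diagSteps (toggle l) = -(-1) ^ diagSteps l := by
  induction l using toggle.induct with
  | case1 => exact h.elim
  | case2 t =>
    simp [toggle, diagSteps_cons_diag, diagSteps_cons_of_ne, pow_succ]
  | case3 t =>
    simp [toggle, diagSteps_cons_diag, diagSteps_cons_of_ne, pow_succ]
  | case4 s t hD hEN ih =>
    rw [HasToggleSite.eq_4 s t hD hEN] at h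
    rw [toggle.eq_4 s t hD hEN, diagSteps_cons_of_ne _ hD, diagSteps_cons_of_ne _ hD, ih h]

lemma sum_map_toggle {M : Type*} [AddCommMonoid M] (f : ℕ × ℕ →+ M) (l : List (ℕ × ℕ)) :
    ((toggle l).map f).sum = (l.map f).sum := by
  induction l using toggle.induct with
  | case1 => rfl
  | case2 t =>
    simp [toggle, ← add_assoc, ← map_add]
  | case3 t =>
    simp [toggle, ← add_assoc, ← map_add]
  | case4 s t hD hEN ih => simp [toggle.eq_4 s t hD hEN, ih]

lemma mem_toggle {l : List (ℕ × ℕ)} {x : ℕ × ℕ} (h : x ∈ toggle l) :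
    x ∈ l ∨ x = (1, 0) ∨ x = (0, 1) ∨ x = (1, 1) := by
  induction l using toggle.induct with
  | case1 => simp [toggle] at h
  | case2 t | case3 t => simp only [toggle, List.mem_cons] at h ⊢; tauto
  | case4 s t hD hEN ih =>
    rw [toggle.eq_4 s t hD hEN, List.mem_cons] at h
    rcases h with rfl | h
    · simp
    · rcases ih h with h | h <;> simp [h]

def WeaklyBelowFrom (a b : ℕ) (l : List (ℕ × ℕ)) : Prop :=
  ∀ k ≤ l.length, b + ((l.take k).map Prod.snd).sum ≤ a + ((l.take k).map Prod.fst).sum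

lemma weaklyBelowFrom_cons {a b : ℕ} {s : ℕ × ℕ} {t : List (ℕ × ℕ)} :
    WeaklyBelowFrom a b (s :: t) ↔ b ≤ a ∧ WeaklyBelowFrom (a + s.1) (b + s.2) t := by
  constructor
  · intro h
    refine ⟨by simpa using h 0 (by simp), fun k hk => ?_⟩
    have := h (k + 1) (by simpa using hk)
    simp only [List.take_succ_cons, List.map_cons, List.sum_cons] at this
    omega
  · rintro ⟨h₀, h⟩ (_ | k) hk
    · simpa using h₀
    · have := h k (by simpa using hk)
      simp only [List.take_succ_cons, List.map_cons, List.sum_cons]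
      omega

lemma WeaklyBelowFrom.toggle {l : List (ℕ × ℕ)} {a b : ℕ} (h : WeaklyBelowFrom a b l) :
    WeaklyBelowFrom a b (toggle l) := by
  induction l using toggle.induct generalizing a b with
  | case1 => exact h
  | case2 t =>
    rw [weaklyBelowFrom_cons] at h
    simp only [_root_.toggle, weaklyBelowFrom_cons]
    exact ⟨h.1, by omega, by simpa [add_assoc] using h.2⟩
  | case3 t =>
    simp only [weaklyBelowFrom_cons] at h
    simp only [_root_.toggle, weaklyBelowFrom_cons]
    exact ⟨h.1, by simpa [add_assoc] using h.2.2⟩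
  | case4 s t hD hEN ih =>
    rw [weaklyBelowFrom_cons] at h
    rw [toggle.eq_4 s t hD hEN, weaklyBelowFrom_cons]
    exact ⟨h.1, ih h.2⟩

lemma weaklyBelowFrom_zero_iff {l : List (ℕ × ℕ)} :
    WeaklyBelowFrom 0 0 l ↔
      ∀ k ≤ l.length, ((l.take k).map Prod.snd).sum ≤ ((l.take k).map Prod.fst).sum := by
  simp [WeaklyBelowFrom]

lemma IsSchroederPath.toggle {n : ℕ} {l : List (ℕ × ℕ)} (h : IsSchroederPath n l) :
    IsSchroederPath n (toggle l) := by
  obtain ⟨hsteps, hbelow, hfst, hsnd⟩ := h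
  refine ⟨fun s hs => ?_, weaklyBelowFrom_zero_iff.1 (weaklyBelowFrom_zero_iff.2 hbelow).toggle,
    by rw [← hfst]; simpa using sum_map_toggle (AddMonoidHom.fst ℕ ℕ) l,
    by rw [← hsnd]; simpa using sum_map_toggle (AddMonoidHom.snd ℕ ℕ) l⟩
  rcases mem_toggle hs with hs | hs
  · exact hsteps s hs
  · exact hs

lemma eq_replicate_append_replicate_of_not_hasToggleSite {l : List (ℕ × ℕ)}
    (hsteps : ∀ s ∈ l, s = (1, 0) ∨ s = (0, 1) ∨ s = (1, 1)) (h : ¬ HasToggleSite l) :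
    ∃ i j, l = List.replicate i ((0, 1) : ℕ × ℕ) ++ List.replicate j (1, 0) := by
  induction l with
  | nil => exact ⟨0, 0, rfl⟩
  | cons s t ih =>
    obtain ⟨i, j, rfl⟩ := ih (fun x hx => hsteps x (by simp [hx])) (fun ht => h (ht.cons s))
    rcases hsteps s (by simp) with rfl | rfl | rfl
    · obtain rfl : i = 0 := by
        by_contra hi
        obtain ⟨i, rfl⟩ := Nat.exists_eq_succ_of_ne_zero hi
        exact h (by simp [List.replicate_succ, HasToggleSite])
      exact ⟨0, j + 1, by simp [List.replicate_succ]⟩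
    · exact ⟨i + 1, j, by simp [List.replicate_succ]⟩
    · exact (h (by simp [HasToggleSite])).elim

lemma IsSchroederPath.hasToggleSite {n : ℕ} (hn : 0 < n) {l : List (ℕ × ℕ)}
    (h : IsSchroederPath n l) : HasToggleSite l := by
  by_contra hl
  obtain ⟨hsteps, hbelow, -, hsnd⟩ := h
  obtain ⟨i, j, rfl⟩ := eq_replicate_append_replicate_of_not_hasToggleSite hsteps hl
  obtain rfl : i = 0 := by
    simpa [List.take_append_of_le_length] using hbelow i (by simp)
  simp at hsnd
  omega

lemma length_le_sum_fst_add_sum_snd {l : List (ℕ × ℕ)} (h : ∀ s ∈ l, 1 ≤ s.1 + s.2) :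
    l.length ≤ (l.map Prod.fst).sum + (l.map Prod.snd).sum := by
  induction l with
  | nil => simp
  | cons s t ih =>
    have := ih fun x hx => h x (by simp [hx])
    have := h s (by simp)
    simp only [List.length_cons, List.map_cons, List.sum_cons]
    omega

lemma setOf_isSchroederPath_finite (n : ℕ) : {P : List (ℕ × ℕ) | IsSchroederPath n P}.Finite := by
  let S : Finset (ℕ × ℕ) := {(1, 0), (0, 1), (1, 1)}
  refine ((List.finite_length_le S (2 * n)).image (List.map Subtype.val)).subset ?_
  rintro P ⟨hsteps, -, hfst, hsnd⟩
  have hS : ∀ s ∈ P, s ∈ S := by simpa [S] using hsteps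
  refine ⟨P.attachWith (· ∈ S) hS, ?_, List.attachWith_map_subtype_val hS⟩
  have := length_le_sum_fst_add_sum_snd fun s hs => by
    rcases hsteps s hs with rfl | rfl | rfl <;> simp
  simp only [Set.mem_ofPred_eq, List.length_attachWith]
  omega

open Polynomial in
lemma schroederPoly_eq_sum (n : ℕ) :
    schroederPoly n = ∑ P ∈ (setOf_isSchroederPath_finite n).toFinset, X ^ diagSteps P :=
  finsum_mem_eq_finite_toFinset_sum _ _

lemma sum_neg_one_pow_diagSteps_eq_zero {n : ℕ} (hn : 0 < n) :
    ∑ P ∈ (setOf_isSchroederPath_finite n).toFinset, (-1 : ℤ) ^ diagSteps P = 0 := by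
  refine Finset.sum_involution (fun P _ => toggle P) (fun P hP => ?_) (fun P hP _ hfix => ?_)
    (fun P hP => ?_) (fun P hP => ?_)
  all_goals rw [Set.Finite.mem_toFinset] at hP
  · rw [neg_one_pow_diagSteps_toggle (hP.hasToggleSite hn), add_neg_cancel]
  · have := neg_one_pow_diagSteps_toggle (R := ℤ) (hP.hasToggleSite hn)
    rw [hfix, eq_neg_iff_add_eq_zero, ← two_mul] at this
    simp at this
  · simpa using hP.toggle
  · exact toggle_toggle (hP.hasToggleSite hn)

open Polynomial in
/-- For every `n ≥ 1` the `q`-Schröder polynomial `r_n(q)` is divisible by `1 + q`. -/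
theorem stmt_11 (n : ℕ) (hn : 1 ≤ n) : (1 + X) ∣ schroederPoly n := by
  rw [show (1 + X : ℤ[X]) = X - C (-1) by simp [add_comm], dvd_iff_isRoot, IsRoot,
    schroederPoly_eq_sum, eval_finsetSum]
  simpa using sum_neg_one_pow_diagSteps_eq_zero hn
end

section
/- For an admissible collection S of length n with S_1 = {1}, let S' be the length-(n-1) collection defined by S'_i = { j-1 : j ∈ S_{i+1}, j ≥ 2 } (removing 1 and shifting down). Then S' is admissible, and the dimension statistic satisfies d(S) = d(S') + n, where d(S) = N_PI(S) + N_PP(S) + N_II(S) with N_PI, N_PP, N_II as defined from S. -/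
/-!
Every `S t` contains `1`, so deleting `1` and shifting down by one matches the pairs `(k, l)`
with `k ≥ 2` counted by each statistic of `S` with the pairs counted by the same statistic of
`S'`. It remains to look at the pairs with smallest entry `1` (`2` for `N_II`): for `N_PI` all
`n` pairs `(1, l)` count, with witness `t = 1`; for `N_PP` none does, since `1 ∈ S t`; for
`N_II` none does, since the only candidate witness is `t = 1` and `S 1 = {1}`.
-/

/-- A collection `S` of subsets `S 1, ..., S n` of `{1, ..., n+1}` is admissible if
`#S i = i` and `S k ⊆ S (k+1) ∪ {k+1}`; `S i = ∅` outside the range `1 ≤ i ≤ n`. -/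
def IsAdmissible (n : ℕ) (S : ℕ → Finset ℕ) : Prop :=
  (∀ i, i = 0 ∨ n < i → S i = ∅) ∧
  (∀ i, 1 ≤ i → i ≤ n → S i ⊆ Finset.Icc 1 (n + 1) ∧ (S i).card = i) ∧
  (∀ k, 1 ≤ k → k < n → S k ⊆ S (k + 1) ∪ {k + 1})

/-- `N_PI(S)`: pairs `1 ≤ k < l ≤ n+1` such that `k ∈ S t`, `l ∉ S t` for some `k ≤ t < l`. -/
def NPI (n : ℕ) (S : ℕ → Finset ℕ) : ℕ :=
  ((Finset.Icc 1 (n + 1) ×ˢ Finset.Icc 1 (n + 1)).filter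
    (fun p => p.1 < p.2 ∧ ∃ t ∈ Finset.Ico p.1 p.2, p.1 ∈ S t ∧ p.2 ∉ S t)).card

/-- `N_PP(S)`: pairs `1 ≤ k < l ≤ n` such that `l ∈ S t`, `k ∉ S t` for some `t ≥ l`. -/
def NPP (n : ℕ) (S : ℕ → Finset ℕ) : ℕ :=
  ((Finset.Icc 1 n ×ˢ Finset.Icc 1 n).filter
    (fun p => p.1 < p.2 ∧ ∃ t ∈ Finset.Icc p.2 n, p.2 ∈ S t ∧ p.1 ∉ S t)).card

/-- `N_II(S)`: pairs `2 ≤ k < l ≤ n+1` such that `l ∈ S t`, `k ∉ S t` for some `t < k`. -/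
def NII (n : ℕ) (S : ℕ → Finset ℕ) : ℕ :=
  ((Finset.Icc 2 (n + 1) ×ˢ Finset.Icc 2 (n + 1)).filter
    (fun p => p.1 < p.2 ∧ ∃ t ∈ Finset.Ico 1 p.1, p.2 ∈ S t ∧ p.1 ∉ S t)).card

open Finset

section PairCount

variable (P : ℕ → ℕ → Prop) [DecidableRel P]

def pairCount (a b : ℕ) : ℕ :=
  ((Icc a b ×ˢ Icc a b).filter (fun p => p.1 < p.2 ∧ P p.1 p.2)).card

theorem pairCount_succ_succ (a b : ℕ) :
    pairCount P (a + 1) (b + 1) = pairCount (fun k l => P (k + 1) (l + 1)) a b := by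
  symm
  apply card_nbij' (fun p => (p.1 + 1, p.2 + 1)) (fun p => (p.1 - 1, p.2 - 1))
  · rintro ⟨k, l⟩ h
    simp only [coe_filter, mem_product, mem_Icc, Set.mem_ofPred_eq] at h ⊢
    exact ⟨by omega, by omega, h.2.2⟩
  · rintro ⟨k, l⟩ h
    simp only [coe_filter, mem_product, mem_Icc, Set.mem_ofPred_eq] at h ⊢
    obtain ⟨k, rfl⟩ : ∃ k', k = k' + 1 := ⟨k - 1, by omega⟩
    obtain ⟨l, rfl⟩ : ∃ l', l = l' + 1 := ⟨l - 1, by omega⟩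
    exact ⟨by omega, by omega, h.2.2⟩
  · rintro ⟨k, l⟩ -; simp
  · rintro ⟨k, l⟩ h
    simp only [coe_filter, mem_product, mem_Icc, Set.mem_ofPred_eq] at h
    ext <;> simp only <;> omega

theorem pairCount_eq_pairCount_succ_add (a b : ℕ) :
    pairCount P a b = pairCount P (a + 1) b + ((Ioc a b).filter (P a)).card := by
  rw [pairCount, ← card_filter_add_card_filter_not (p := fun p : ℕ × ℕ => p.1 ≠ a),
    filter_filter, filter_filter]
  congr 1
  · rw [pairCount]
    congr 1
    ext ⟨k, l⟩
    simp only [mem_filter, mem_product, mem_Icc]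
    constructor
    · rintro ⟨_, ⟨hkl, hP⟩, _⟩
      exact ⟨by omega, hkl, hP⟩
    · rintro ⟨_, hkl, hP⟩
      exact ⟨by omega, ⟨hkl, hP⟩, by omega⟩
  · apply card_nbij' Prod.snd (fun l => (a, l))
    · rintro ⟨k, l⟩ h
      simp only [coe_filter, mem_product, mem_Icc, mem_Ioc, not_not, Set.mem_ofPred_eq] at h ⊢
      obtain ⟨_, ⟨hkl, hP⟩, rfl⟩ := h
      exact ⟨⟨hkl, by omega⟩, hP⟩
    · intro l h
      simp only [coe_filter, mem_product, mem_Icc, mem_Ioc, not_not, Set.mem_ofPred_eq] at h ⊢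
      exact ⟨by omega, ⟨h.1.1, h.2⟩, trivial⟩
    · rintro ⟨k, l⟩ h
      simp only [coe_filter, not_not, Set.mem_ofPred_eq] at h
      simp [h.2]
    · intro l _; rfl

theorem pairCount_eq_pairCount_succ_of_forall_not {a b : ℕ} (h : ∀ l, a < l → l ≤ b → ¬P a l) :
    pairCount P a b = pairCount P (a + 1) b := by
  rw [pairCount_eq_pairCount_succ_add, card_eq_zero.2, add_zero]
  exact filter_eq_empty_iff.2 fun l hl => h l (mem_Ioc.1 hl).1 (mem_Ioc.1 hl).2

theorem pairCount_eq_pairCount_succ_add_of_forall {a b : ℕ} (h : ∀ l, a < l → l ≤ b → P a l) :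
    pairCount P a b = pairCount P (a + 1) b + (b - a) := by
  rw [pairCount_eq_pairCount_succ_add, filter_true_of_mem, Nat.card_Ioc]
  exact fun l hl => h l (mem_Ioc.1 hl).1 (mem_Ioc.1 hl).2

theorem pairCount_congr {P Q : ℕ → ℕ → Prop} [DecidableRel P] [DecidableRel Q] {a b : ℕ}
    (h : ∀ k l, a ≤ k → k < l → l ≤ b → (P k l ↔ Q k l)) :
    pairCount P a b = pairCount Q a b := by
  unfold pairCount
  congr 1
  refine filter_congr fun p hp => ?_
  simp only [mem_product, mem_Icc] at hp
  exact and_congr_right fun hlt => h _ _ hp.1.1 hlt hp.2.2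

end PairCount

theorem exists_mem_Ico_succ_iff {p : ℕ → Prop} {a b : ℕ} :
    (∃ t ∈ Ico (a + 1) (b + 1), p t) ↔ ∃ t ∈ Ico a b, p (t + 1) := by
  simp [← map_add_right_Ico]

theorem exists_mem_Icc_succ_iff {p : ℕ → Prop} {a b : ℕ} :
    (∃ t ∈ Icc (a + 1) (b + 1), p t) ↔ ∃ t ∈ Icc a b, p (t + 1) := by
  simp [← map_add_right_Icc]

theorem NPI_eq_pairCount (n : ℕ) (S : ℕ → Finset ℕ) :
    NPI n S = pairCount (fun k l => ∃ t ∈ Ico k l, k ∈ S t ∧ l ∉ S t) 1 (n + 1) := rfl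

theorem NPP_eq_pairCount (n : ℕ) (S : ℕ → Finset ℕ) :
    NPP n S = pairCount (fun k l => ∃ t ∈ Icc l n, l ∈ S t ∧ k ∉ S t) 1 n := rfl

theorem NII_eq_pairCount (n : ℕ) (S : ℕ → Finset ℕ) :
    NII n S = pairCount (fun k l => ∃ t ∈ Ico 1 k, l ∈ S t ∧ k ∉ S t) 2 (n + 1) := rfl

def shiftCollection (n : ℕ) (S : ℕ → Finset ℕ) (i : ℕ) : Finset ℕ :=
  if 1 ≤ i ∧ i ≤ n - 1 then ((S (i + 1)).filter (fun j => 2 ≤ j)).image (fun j => j - 1) else ∅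

section Shift

variable {n : ℕ} {S : ℕ → Finset ℕ}

theorem mem_shiftCollection {t j : ℕ} :
    j ∈ shiftCollection n S t ↔ (1 ≤ t ∧ t ≤ n - 1) ∧ 1 ≤ j ∧ j + 1 ∈ S (t + 1) := by
  unfold shiftCollection
  split_ifs with ht
  · simp only [mem_image, mem_filter, ht, true_and]
    constructor
    · rintro ⟨i, ⟨hi, hi2⟩, rfl⟩
      rw [Nat.sub_add_cancel (by omega)]
      exact ⟨by omega, hi⟩
    · rintro ⟨hj, hmem⟩
      exact ⟨j + 1, ⟨hmem, by omega⟩, by omega⟩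
  · simp [ht]

theorem succ_mem_iff_mem_shiftCollection {t j : ℕ} (ht : 1 ≤ t) (htn : t ≤ n) (hj : 1 ≤ j) :
    j + 1 ∈ S (t + 1) ↔ j ∈ shiftCollection (n + 1) S t := by
  simp [mem_shiftCollection, ht, htn, hj]

theorem IsAdmissible.subset_Icc (hS : IsAdmissible n S) (i : ℕ) : S i ⊆ Icc 1 (n + 1) := by
  by_cases hi : 1 ≤ i ∧ i ≤ n
  · exact (hS.2.1 i hi.1 hi.2).1
  · simp [hS.1 i (by omega)]

theorem IsAdmissible.one_mem (hS : IsAdmissible n S) (h1 : S 1 = {1}) {t : ℕ} (ht : 1 ≤ t)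
    (htn : t ≤ n) : 1 ∈ S t := by
  induction t, ht using Nat.le_induction with
  | base => simp [h1]
  | succ t ht ih =>
    have := hS.2.2 t ht (by omega) (ih (by omega))
    exact (mem_union.1 this).resolve_right (by simp only [mem_singleton]; omega)

theorem isAdmissible_shiftCollection (hS : IsAdmissible n S) (h1 : S 1 = {1}) :
    IsAdmissible (n - 1) (shiftCollection n S) := by
  refine ⟨fun i hi => ?_, fun i hi hin => ⟨fun j hj => ?_, ?_⟩, fun k hk hkn j hj => ?_⟩
  · ext j
    simp only [mem_shiftCollection, notMem_empty, iff_false]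
    rintro ⟨⟨_, _⟩, -⟩
    omega
  · obtain ⟨-, hj1, hmem⟩ := mem_shiftCollection.1 hj
    have := hS.subset_Icc (i + 1) hmem
    simp only [mem_Icc] at this ⊢
    omega
  · have herase : (S (i + 1)).filter (2 ≤ ·) = (S (i + 1)).erase 1 := by
      ext j
      have : j ∈ S (i + 1) → j ∈ Icc 1 (n + 1) := fun h => hS.subset_Icc (i + 1) h
      simp only [mem_filter, mem_erase, mem_Icc] at this ⊢
      constructor
      · rintro ⟨hj, h2⟩
        exact ⟨by omega, hj⟩
      · rintro ⟨hj1, hj⟩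
        exact ⟨hj, by have := (this hj).1; omega⟩
    have hinj : Set.InjOn (· - 1) ((S (i + 1)).filter (2 ≤ ·) : Set ℕ) := by
      intro a ha b hb hab
      simp only [coe_filter, Set.mem_ofPred_eq] at ha hb hab
      omega
    rw [shiftCollection, if_pos ⟨hi, hin⟩, card_image_of_injOn hinj, herase,
      card_erase_of_mem (hS.one_mem h1 (by omega) (by omega)),
      (hS.2.1 (i + 1) (by omega) (by omega)).2, Nat.add_sub_cancel]
  · obtain ⟨-, hj1, hmem⟩ := mem_shiftCollection.1 hj
    rcases mem_union.1 (hS.2.2 (k + 1) (by omega) (by omega) hmem) with h | h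
    · exact mem_union_left _ (mem_shiftCollection.2 ⟨⟨by omega, by omega⟩, hj1, h⟩)
    · exact mem_union_right _ (by simp only [mem_singleton] at h ⊢; omega)

end Shift

section Counts

variable {n : ℕ} {S : ℕ → Finset ℕ}

theorem NPI_succ_eq_NPI_shiftCollection_add (h1 : S 1 = {1}) :
    NPI (n + 1) S = NPI n (shiftCollection (n + 1) S) + (n + 1) := by
  rw [NPI_eq_pairCount, NPI_eq_pairCount, pairCount_eq_pairCount_succ_add_of_forall,
    pairCount_succ_succ, Nat.add_sub_cancel]
  · congr 1
    refine pairCount_congr fun k l hk hkl hl => ?_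
    rw [exists_mem_Ico_succ_iff]
    refine exists_congr fun t => and_congr_right fun ht => ?_
    rw [mem_Ico] at ht
    have ht1 : 1 ≤ t := by omega
    have htn : t ≤ n := by omega
    rw [succ_mem_iff_mem_shiftCollection ht1 htn hk,
      succ_mem_iff_mem_shiftCollection ht1 htn (by omega : 1 ≤ l)]
  · intro l hl _
    exact ⟨1, by simp only [mem_Ico]; omega, by simp [h1], by simp only [h1, mem_singleton]; omega⟩

theorem IsAdmissible.NPP_succ_eq_NPP_shiftCollection (hS : IsAdmissible (n + 1) S) (h1 : S 1 = {1}) :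
    NPP (n + 1) S = NPP n (shiftCollection (n + 1) S) := by
  rw [NPP_eq_pairCount, NPP_eq_pairCount, pairCount_eq_pairCount_succ_of_forall_not,
    pairCount_succ_succ]
  · refine pairCount_congr fun k l hk hkl hl => ?_
    rw [exists_mem_Icc_succ_iff]
    refine exists_congr fun t => and_congr_right fun ht => ?_
    rw [mem_Icc] at ht
    have ht1 : 1 ≤ t := by omega
    have htn : t ≤ n := by omega
    rw [succ_mem_iff_mem_shiftCollection ht1 htn hk,
      succ_mem_iff_mem_shiftCollection ht1 htn (by omega : 1 ≤ l)]
  · rintro l hl - ⟨t, ht, -, h1t⟩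
    rw [mem_Icc] at ht
    exact h1t (hS.one_mem h1 (by omega) ht.2)

theorem NII_succ_eq_NII_shiftCollection (h1 : S 1 = {1}) :
    NII (n + 1) S = NII n (shiftCollection (n + 1) S) := by
  rw [NII_eq_pairCount, NII_eq_pairCount, pairCount_eq_pairCount_succ_of_forall_not,
    pairCount_succ_succ]
  · refine pairCount_congr fun k l hk hkl hl => ?_
    have hskip : (∃ t ∈ Ico 1 (k + 1), l + 1 ∈ S t ∧ k + 1 ∉ S t) ↔
        ∃ t ∈ Ico (1 + 1) (k + 1), l + 1 ∈ S t ∧ k + 1 ∉ S t := by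
      refine ⟨fun ⟨t, ht, hlt, hkt⟩ => ⟨t, ?_, hlt, hkt⟩, fun ⟨t, ht, h⟩ => ⟨t, ?_, h⟩⟩
      · have : t ≠ 1 := by
          rintro rfl
          simp only [h1, mem_singleton] at hlt
          omega
        rw [mem_Ico] at ht ⊢
        omega
      · rw [mem_Ico] at ht ⊢
        omega
    rw [hskip, exists_mem_Ico_succ_iff]
    refine exists_congr fun t => and_congr_right fun ht => ?_
    rw [mem_Ico] at ht
    have htn : t ≤ n := by omega
    rw [succ_mem_iff_mem_shiftCollection ht.1 htn (by omega : 1 ≤ l),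
      succ_mem_iff_mem_shiftCollection ht.1 htn (by omega : 1 ≤ k)]
  · intro l hl _
    simp only [Nat.Ico_succ_singleton, mem_singleton, exists_eq_left, h1]
    omega

end Counts

/-- For an admissible collection with `S 1 = {1}`, the shifted collection
`S' i = {j - 1 : j ∈ S (i+1), j ≥ 2}` is admissible of length `n - 1` and the
dimension statistic satisfies `d(S) = d(S') + n`. -/
theorem stmt_14 (n : ℕ) (hn : 1 ≤ n) (S : ℕ → Finset ℕ) (hS : IsAdmissible n S)
    (h1 : S 1 = {1})
    (S' : ℕ → Finset ℕ)
    (hS' : S' = fun i => if 1 ≤ i ∧ i ≤ n - 1 then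
      ((S (i + 1)).filter (fun j => 2 ≤ j)).image (fun j => j - 1) else ∅) :
    IsAdmissible (n - 1) S' ∧
    NPI n S + NPP n S + NII n S =
      (NPI (n - 1) S' + NPP (n - 1) S' + NII (n - 1) S') + n := by
  obtain ⟨m, rfl⟩ := Nat.exists_eq_add_of_le' hn
  obtain rfl : S' = shiftCollection (m + 1) S := hS'
  refine ⟨isAdmissible_shiftCollection hS h1, ?_⟩
  rw [NPI_succ_eq_NPI_shiftCollection_add h1, hS.NPP_succ_eq_NPP_shiftCollection h1, NII_succ_eq_NII_shiftCollection h1, Nat.add_sub_cancel]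
  ring
end
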